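/- arXiv:1903.09165 — 9 statements merged into one kernel-verified Lean document; each statement's English description precedes it below -/
import Mathlib

section
/- Let g be a Lie algebra over a field k with a nondegenerate invariant symmetric bilinear form B_g, let h be a Lie algebra over k, and let ρ be a Lie algebra homomorphism from h to the derivations of g such that B_g(ρ(a)x, y) + B_g(x, ρ(a)y) = 0 for all a in h and x, y in g. Then the double extension bracket on g ⊕ h ⊕ h* satisfies the Jacobi identity (so D(g,h) is a Lie algebra), and for every invariant symmetric bilinear form h₀ on h the bilinear form Ω((x,a,α),(y,b,β)) = B_g(x,y) + h₀(a,b) + α(b) + β(a) is symmetric, invariant, and nondegenerate on D(g,h). -/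
/-!
The `g`- and `h`-components of the Jacobi identity are those of the semidirect product
`g ⋊_ρ h` and of `h`. The `h*`-component, evaluated at `d ∈ h`, contains the cyclic sum of
`B_g(ρ(d)x, [y,z])`, which vanishes because `ρ(d)` is a `B_g`-antisymmetric derivation and
`B_g(x, [y,z])` is cyclically invariant; the remaining terms cancel in pairs once
`B_g(ρ([a,d])y, z)` is written as `B_g(ρ(a)y, ρ(d)z) - B_g(ρ(d)y, ρ(a)z)`.
Nondegeneracy of `Ω`: pairing with `(y,0,0)`, `(0,0,φ)` and `(0,b,0)` forces `x`, `a`, `α` to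
vanish in turn.
-/

section DoubleExtension

variable (k : Type*) [Field k] (g h : Type*)
  [LieRing g] [LieAlgebra k g] [LieRing h] [LieAlgebra k h]

/-- The element `γ(x,y) ∈ h*` given by `γ(x,y)(c) = B_g(ρ(c)x, y)`. -/
def doubleExtGamma (Bg : g →ₗ[k] g →ₗ[k] k) (ρ : h →ₗ⁅k⁆ LieDerivation k g g)
    (x y : g) : Module.Dual k h where
  toFun c := Bg (ρ c x) y
  map_add' c₁ c₂ := by simp
  map_smul' t c := by simp

/-- The double-extension bracket on `g ⊕ h ⊕ h*`:
`[(x,a,α),(y,b,β)] = ([x,y] + ρ(a)y − ρ(b)x, [a,b], γ(x,y) − β∘ad_a + α∘ad_b)`. -/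
def doubleExtBracket (Bg : g →ₗ[k] g →ₗ[k] k) (ρ : h →ₗ⁅k⁆ LieDerivation k g g)
    (u v : g × h × Module.Dual k h) : g × h × Module.Dual k h :=
  (⁅u.1, v.1⁆ + ρ u.2.1 v.1 - ρ v.2.1 u.1,
   ⁅u.2.1, v.2.1⁆,
   doubleExtGamma k g h Bg ρ u.1 v.1
     - v.2.2 ∘ₗ LieAlgebra.ad k h u.2.1 + u.2.2 ∘ₗ LieAlgebra.ad k h v.2.1)

/-- The canonical bilinear form `Ω` on the double extension `g ⊕ h ⊕ h*`:
`Ω((x,a,α),(y,b,β)) = B_g(x,y) + h₀(a,b) + α(b) + β(a)`. -/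
def doubleExtForm (Bg : g →ₗ[k] g →ₗ[k] k) (h₀ : h →ₗ[k] h →ₗ[k] k)
    (u v : g × h × Module.Dual k h) : k :=
  Bg u.1 v.1 + h₀ u.2.1 v.2.1 + u.2.2 v.2.1 + v.2.2 u.2.1

end DoubleExtension

section InvariantForm

variable {k g : Type*} [Field k] [LieRing g] [LieAlgebra k g] {B : g →ₗ[k] g →ₗ[k] k}

theorem lie_cyclic_of_symm_of_invariant (hsymm : ∀ x y : g, B x y = B y x)
    (hinv : ∀ x y z : g, B ⁅z, x⁆ y + B x ⁅z, y⁆ = 0) (x y z : g) :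
    B x ⁅y, z⁆ = B z ⁅x, y⁆ := by
  have := hinv x z y
  rw [← lie_skew y x, map_neg, LinearMap.neg_apply] at this
  linear_combination this + hsymm ⁅x, y⁆ z

theorem cyclic_sum_derivation_lie_eq_zero (hsymm : ∀ x y : g, B x y = B y x)
    (hinv : ∀ x y z : g, B ⁅z, x⁆ y + B x ⁅z, y⁆ = 0) (D : LieDerivation k g g)
    (hD : ∀ x y : g, B (D x) y + B x (D y) = 0) (x y z : g) :
    B (D x) ⁅y, z⁆ + B (D y) ⁅z, x⁆ + B (D z) ⁅x, y⁆ = 0 := by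
  have hcyc := lie_cyclic_of_symm_of_invariant hsymm hinv
  have hleibniz := hD x ⁅y, z⁆
  rw [LieDerivation.apply_lie_eq_add, map_add] at hleibniz
  linear_combination hleibniz - hcyc x y (D z) - hcyc x (D y) z - hcyc z x (D y)

theorem lie_derivation_apply_of_antisymm (D₁ D₂ : LieDerivation k g g)
    (hD₁ : ∀ x y : g, B (D₁ x) y + B x (D₁ y) = 0)
    (hD₂ : ∀ x y : g, B (D₂ x) y + B x (D₂ y) = 0) (x y : g) :
    B (⁅D₁, D₂⁆ x) y = B (D₁ x) (D₂ y) - B (D₂ x) (D₁ y) := by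
  rw [LieDerivation.lie_apply, map_sub, LinearMap.sub_apply]
  linear_combination hD₁ (D₂ x) y - hD₂ (D₁ x) y

end InvariantForm

section DoubleExtension

variable {k g h : Type*} [Field k] [LieRing g] [LieAlgebra k g] [LieRing h] [LieAlgebra k h]
  {Bg : g →ₗ[k] g →ₗ[k] k} {ρ : h →ₗ⁅k⁆ LieDerivation k g g}

local notation "D" => g × h × Module.Dual k h

theorem doubleExtBracket_jacobi_fst (u v w : D) :
    (doubleExtBracket k g h Bg ρ u (doubleExtBracket k g h Bg ρ v w)).1 +
      (doubleExtBracket k g h Bg ρ v (doubleExtBracket k g h Bg ρ w u)).1 +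
        (doubleExtBracket k g h Bg ρ w (doubleExtBracket k g h Bg ρ u v)).1 = 0 := by
  obtain ⟨x, a, -⟩ := u
  obtain ⟨y, b, -⟩ := v
  obtain ⟨z, c, -⟩ := w
  simp only [doubleExtBracket, lie_add, lie_sub, map_add, map_sub, LieHom.map_lie,
    LieDerivation.lie_apply, LieDerivation.apply_lie_eq_add, ← lie_skew (ρ _ _)]
  linear_combination (norm := abel) lie_jacobi x y z

theorem doubleExtBracket_jacobi_snd_snd (hBgsymm : ∀ x y : g, Bg x y = Bg y x)
    (hBginv : ∀ x y z : g, Bg ⁅z, x⁆ y + Bg x ⁅z, y⁆ = 0)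
    (hanti : ∀ (a : h) (x y : g), Bg (ρ a x) y + Bg x (ρ a y) = 0) (u v w : D) :
    (doubleExtBracket k g h Bg ρ u (doubleExtBracket k g h Bg ρ v w)).2.2 +
      (doubleExtBracket k g h Bg ρ v (doubleExtBracket k g h Bg ρ w u)).2.2 +
        (doubleExtBracket k g h Bg ρ w (doubleExtBracket k g h Bg ρ u v)).2.2 = 0 := by
  obtain ⟨x, a, α⟩ := u
  obtain ⟨y, b, β⟩ := v
  obtain ⟨z, c, γ⟩ := w
  ext d
  have hρ (a b : h) := lie_derivation_apply_of_antisymm (ρ a) (ρ b) (hanti a) (hanti b)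
  simp only [doubleExtBracket, doubleExtGamma, LinearMap.add_apply, LinearMap.sub_apply,
    LinearMap.zero_apply, LinearMap.comp_apply, LinearMap.coe_mk, AddHom.coe_mk,
    LieAlgebra.ad_apply, map_add, map_sub, LieHom.map_lie, hρ, Ring.lie_def, Module.End.mul_apply]
  linear_combination cyclic_sum_derivation_lie_eq_zero hBgsymm hBginv (ρ d) (hanti d) x y z
    + hBgsymm (ρ d x) (ρ b z) + hBgsymm (ρ d y) (ρ c x) + hBgsymm (ρ d z) (ρ a y)

theorem doubleExtBracket_jacobi (hBgsymm : ∀ x y : g, Bg x y = Bg y x)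
    (hBginv : ∀ x y z : g, Bg ⁅z, x⁆ y + Bg x ⁅z, y⁆ = 0)
    (hanti : ∀ (a : h) (x y : g), Bg (ρ a x) y + Bg x (ρ a y) = 0) (u v w : D) :
    doubleExtBracket k g h Bg ρ u (doubleExtBracket k g h Bg ρ v w) +
      doubleExtBracket k g h Bg ρ v (doubleExtBracket k g h Bg ρ w u) +
        doubleExtBracket k g h Bg ρ w (doubleExtBracket k g h Bg ρ u v) = 0 :=
  Prod.ext (doubleExtBracket_jacobi_fst u v w) <|
    Prod.ext (lie_jacobi u.2.1 v.2.1 w.2.1)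
      (doubleExtBracket_jacobi_snd_snd hBgsymm hBginv hanti u v w)

theorem doubleExtForm_comm {h₀ : h →ₗ[k] h →ₗ[k] k}
    (hBgsymm : ∀ x y : g, Bg x y = Bg y x)
    (h₀symm : ∀ a b : h, h₀ a b = h₀ b a) (u v : D) :
    doubleExtForm k g h Bg h₀ u v = doubleExtForm k g h Bg h₀ v u := by
  simp only [doubleExtForm]
  linear_combination hBgsymm u.1 v.1 + h₀symm u.2.1 v.2.1

theorem doubleExtForm_invariant {h₀ : h →ₗ[k] h →ₗ[k] k}
    (hBgsymm : ∀ x y : g, Bg x y = Bg y x)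
    (hBginv : ∀ x y z : g, Bg ⁅z, x⁆ y + Bg x ⁅z, y⁆ = 0)
    (hanti : ∀ (a : h) (x y : g), Bg (ρ a x) y + Bg x (ρ a y) = 0)
    (h₀inv : ∀ a b c : h, h₀ ⁅c, a⁆ b + h₀ a ⁅c, b⁆ = 0) (u v w : D) :
    doubleExtForm k g h Bg h₀ (doubleExtBracket k g h Bg ρ w u) v +
      doubleExtForm k g h Bg h₀ u (doubleExtBracket k g h Bg ρ w v) = 0 := by
  obtain ⟨x, a, α⟩ := u
  obtain ⟨y, b, β⟩ := v
  obtain ⟨z, c, γ⟩ := w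
  have hskew : γ ⁅b, a⁆ = -γ ⁅a, b⁆ := by rw [← lie_skew a b, map_neg, neg_neg]
  simp only [doubleExtForm, doubleExtBracket, doubleExtGamma, LinearMap.add_apply,
    LinearMap.sub_apply, LinearMap.comp_apply, LinearMap.coe_mk, AddHom.coe_mk,
    LieAlgebra.ad_apply, map_add, map_sub]
  linear_combination hBginv x y z + hanti c x y + h₀inv a b c + hanti b z x - hanti b x z
    + hBgsymm (ρ b x) z + hskew

theorem doubleExtForm_nondegenerate {h₀ : h →ₗ[k] h →ₗ[k] k}
    (hBgnondeg : ∀ x : g, (∀ y : g, Bg x y = 0) → x = 0) (u : D)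
    (hu : ∀ v : D, doubleExtForm k g h Bg h₀ u v = 0) : u = 0 := by
  obtain ⟨x, a, α⟩ := u
  have hx : x = 0 := hBgnondeg x fun y => by simpa [doubleExtForm] using hu (y, 0, 0)
  have ha : a = 0 := (Module.forall_dual_apply_eq_zero_iff k a).mp fun φ => by
    simpa [doubleExtForm] using hu (0, 0, φ)
  have hα : α = 0 := by
    ext b
    simpa [doubleExtForm, ha] using hu (0, b, 0)
  simp [hx, ha, hα]

end DoubleExtension

/-- Given a Lie algebra `g` with a nondegenerate invariant symmetric bilinear
form `B_g`, a Lie algebra `h` acting on `g` by `B_g`-antisymmetric derivations via a Lie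
algebra homomorphism `ρ`, the double-extension bracket on `g ⊕ h ⊕ h*` satisfies the Jacobi
identity, and for every invariant symmetric bilinear form `h₀` on `h` the form `Ω` is
symmetric, invariant and nondegenerate. -/
theorem double_extension_is_metric
    (k : Type*) [Field k] (g h : Type*)
    [LieRing g] [LieAlgebra k g] [LieRing h] [LieAlgebra k h]
    (Bg : g →ₗ[k] g →ₗ[k] k)
    (hBgsymm : ∀ x y : g, Bg x y = Bg y x)
    (hBginv : ∀ x y z : g, Bg ⁅z, x⁆ y + Bg x ⁅z, y⁆ = 0)
    (hBgnondeg : ∀ x : g, (∀ y : g, Bg x y = 0) → x = 0)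
    (ρ : h →ₗ⁅k⁆ LieDerivation k g g)
    (hanti : ∀ (a : h) (x y : g), Bg (ρ a x) y + Bg x (ρ a y) = 0) :
    (∀ u v w : g × h × Module.Dual k h,
        doubleExtBracket k g h Bg ρ u (doubleExtBracket k g h Bg ρ v w) +
          doubleExtBracket k g h Bg ρ v (doubleExtBracket k g h Bg ρ w u) +
            doubleExtBracket k g h Bg ρ w (doubleExtBracket k g h Bg ρ u v) = 0) ∧
    (∀ h₀ : h →ₗ[k] h →ₗ[k] k,
        (∀ a b : h, h₀ a b = h₀ b a) →
        (∀ a b c : h, h₀ ⁅c, a⁆ b + h₀ a ⁅c, b⁆ = 0) →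
        (∀ u v : g × h × Module.Dual k h,
            doubleExtForm k g h Bg h₀ u v = doubleExtForm k g h Bg h₀ v u) ∧
        (∀ u v w : g × h × Module.Dual k h,
            doubleExtForm k g h Bg h₀ (doubleExtBracket k g h Bg ρ w u) v +
              doubleExtForm k g h Bg h₀ u (doubleExtBracket k g h Bg ρ w v) = 0) ∧
        (∀ u : g × h × Module.Dual k h,
            (∀ v : g × h × Module.Dual k h, doubleExtForm k g h Bg h₀ u v = 0) → u = 0)) := by
  refine ⟨doubleExtBracket_jacobi hBgsymm hBginv hanti, fun h₀ h₀symm h₀inv => ?_⟩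
  exact ⟨doubleExtForm_comm hBgsymm h₀symm,
    doubleExtForm_invariant hBgsymm hBginv hanti h₀inv, doubleExtForm_nondegenerate hBgnondeg⟩
end

section
/- For every choice of real parameters c, τ, Λ and sign σ ∈ {1, −1}, the six-dimensional real vector space with basis {J, B_1, B_2, H, P_1, P_2} and brackets [J,B_a] = ε_{am}B_m, [J,P_a] = ε_{am}P_m, [B_a,B_b] = −ε_{ab}τ²c²J, [B_a,H] = −ε_{am}τ²P_m, [B_a,P_b] = −ε_{ab}c²H, [H,P_a] = σΛ²ε_{am}B_m, [P_a,P_b] = −σε_{ab}Λ²c²J, [J,H] = 0 satisfies the Jacobi identity; for all real μ, χ the symmetric bilinear form determined by B(H,J) = −μ, B(P_a,B_b) = c²μδ_{ab}, B(J,J) = −χ, B(B_a,B_b) = c²τ²χδ_{ab}, B(H,H) = −σΛ²τ²χ, B(P_a,P_b) = σc²Λ²χδ_{ab}, with all other basis pairings zero, is invariant; and this form is nondegenerate if and only if c ≠ 0 and μ² − σΛ²τ²χ² ≠ 0. -/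
/-!
The Jacobiator and the invariance defect are trilinear, so both identities need only be checked
on the basis `J, B₀, B₁, H, P₀, P₁`, where they are finite computations with the structure
constants. In that basis the Gram matrix of the form becomes block diagonal after reordering to
`(J, H), (B₀, P₀), (B₁, P₁)`, with block determinants `-D, -c⁴D, -c⁴D` for
`D = μ² - σΛ²τ²χ²`; hence its determinant is `-c⁸D³`, which is nonzero exactly when `c ≠ 0`
and `D ≠ 0`.
-/

/-- The two-dimensional antisymmetric symbol, `ε 0 1 = 1 = −ε 1 0`. -/
def eps : Fin 2 → Fin 2 → ℝ := ![![0, 1], ![-1, 0]]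

section Multilinear

variable {R M N ι : Type*} [Semiring R] [AddCommMonoid M] [Module R M]
  [AddCommMonoid N] [Module R N]

theorem IsLinearMap.eq_zero_of_span_eq_top {f : M → N} (hf : IsLinearMap R f) {v : ι → M}
    (hv : Submodule.span R (Set.range v) = ⊤) (h : ∀ i, f (v i) = 0) (x : M) : f x = 0 :=
  LinearMap.congr_fun (LinearMap.ext_on_range (f := hf.mk' f) (g := 0) hv h) x

theorem eq_zero_of_isLinearMap₃_of_span_eq_top {M₁ M₂ M₃ ι₁ ι₂ ι₃ : Type*}
    [AddCommMonoid M₁] [Module R M₁] [AddCommMonoid M₂] [Module R M₂]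
    [AddCommMonoid M₃] [Module R M₃] {T : M₁ → M₂ → M₃ → N}
    (h₁ : ∀ y z, IsLinearMap R (T · y z)) (h₂ : ∀ x z, IsLinearMap R (T x · z))
    (h₃ : ∀ x y, IsLinearMap R (T x y)) {v₁ : ι₁ → M₁} {v₂ : ι₂ → M₂} {v₃ : ι₃ → M₃}
    (hv₁ : Submodule.span R (Set.range v₁) = ⊤) (hv₂ : Submodule.span R (Set.range v₂) = ⊤)
    (hv₃ : Submodule.span R (Set.range v₃) = ⊤) (h : ∀ i j k, T (v₁ i) (v₂ j) (v₃ k) = 0)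
    (x : M₁) (y : M₂) (z : M₃) : T x y z = 0 :=
  (h₁ y z).eq_zero_of_span_eq_top hv₁ (fun i ↦
    (h₂ (v₁ i) z).eq_zero_of_span_eq_top hv₂ (fun j ↦
      (h₃ (v₁ i) (v₂ j)).eq_zero_of_span_eq_top hv₃ (h i j) z) y) x

end Multilinear

structure IsKinematicalAdSBracket (c τ Λ σ : ℝ) {V : Type*} [AddCommGroup V] [Module ℝ V]
    (J H : V) (B P : Fin 2 → V) (br : V →ₗ[ℝ] V →ₗ[ℝ] V) : Prop where
  anti : ∀ x y : V, br x y = - br y x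
  J_B : ∀ a, br J (B a) = ∑ m, eps a m • B m
  J_P : ∀ a, br J (P a) = ∑ m, eps a m • P m
  B_B : ∀ a b, br (B a) (B b) = (-(eps a b * τ ^ 2 * c ^ 2)) • J
  B_H : ∀ a, br (B a) H = ∑ m, (-(eps a m * τ ^ 2)) • P m
  B_P : ∀ a b, br (B a) (P b) = (-(eps a b * c ^ 2)) • H
  H_P : ∀ a, br H (P a) = ∑ m, (σ * Λ ^ 2 * eps a m) • B m
  P_P : ∀ a b, br (P a) (P b) = (-(σ * eps a b * Λ ^ 2 * c ^ 2)) • J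
  J_H : br J H = 0

structure IsKinematicalAdSForm (c τ Λ σ μ χ : ℝ) {V : Type*} [AddCommGroup V] [Module ℝ V]
    (J H : V) (B P : Fin 2 → V) (Bil : V →ₗ[ℝ] V →ₗ[ℝ] ℝ) : Prop where
  symm : ∀ x y : V, Bil x y = Bil y x
  H_J : Bil H J = -μ
  P_B : ∀ a b, Bil (P a) (B b) = (c ^ 2 * μ) * (if a = b then 1 else 0)
  J_J : Bil J J = -χ
  B_B : ∀ a b, Bil (B a) (B b) = (c ^ 2 * τ ^ 2 * χ) * (if a = b then 1 else 0)
  H_H : Bil H H = -(σ * Λ ^ 2 * τ ^ 2 * χ)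
  P_P : ∀ a b, Bil (P a) (P b) = (σ * c ^ 2 * Λ ^ 2 * χ) * (if a = b then 1 else 0)
  J_B : ∀ a, Bil J (B a) = 0
  J_P : ∀ a, Bil J (P a) = 0
  H_B : ∀ a, Bil H (B a) = 0
  H_P : ∀ a, Bil H (P a) = 0

section Kinematical

variable {V : Type*} [AddCommGroup V] [Module ℝ V] {c τ Λ σ μ χ : ℝ} {J H : V}
  {B P : Fin 2 → V}

namespace IsKinematicalAdSBracket

variable {br : V →ₗ[ℝ] V →ₗ[ℝ] V}

theorem apply_self (h : IsKinematicalAdSBracket c τ Λ σ J H B P br) (x : V) : br x x = 0 := by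
  have two_smul_eq : (2 : ℝ) • br x x = 0 := by
    rw [two_smul]; nth_rw 2 [h.anti]; exact add_neg_cancel _
  exact (smul_eq_zero.mp two_smul_eq).resolve_left two_ne_zero

theorem B_J (h : IsKinematicalAdSBracket c τ Λ σ J H B P br) (a : Fin 2) :
    br (B a) J = -(∑ m, eps a m • B m) := by
  rw [h.anti, h.J_B]

theorem P_J (h : IsKinematicalAdSBracket c τ Λ σ J H B P br) (a : Fin 2) :
    br (P a) J = -(∑ m, eps a m • P m) := by
  rw [h.anti, h.J_P]

theorem H_B (h : IsKinematicalAdSBracket c τ Λ σ J H B P br) (a : Fin 2) :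
    br H (B a) = -(∑ m, -(eps a m * τ ^ 2) • P m) := by
  rw [h.anti, h.B_H]

theorem P_B (h : IsKinematicalAdSBracket c τ Λ σ J H B P br) (a b : Fin 2) :
    br (P a) (B b) = -(-(eps b a * c ^ 2) • H) := by
  rw [h.anti, h.B_P]

theorem P_H (h : IsKinematicalAdSBracket c τ Λ σ J H B P br) (a : Fin 2) :
    br (P a) H = -(∑ m, (σ * Λ ^ 2 * eps a m) • B m) := by
  rw [h.anti, h.H_P]

theorem H_J (h : IsKinematicalAdSBracket c τ Λ σ J H B P br) : br H J = 0 := by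
  rw [h.anti, h.J_H, neg_zero]

set_option maxHeartbeats 4000000 in
theorem jacobi (h : IsKinematicalAdSBracket c τ Λ σ J H B P br)
    (hspan : Submodule.span ℝ (Set.range ![J, B 0, B 1, H, P 0, P 1]) = ⊤) (x y z : V) :
    br x (br y z) + br y (br z x) + br z (br x y) = 0 := by
  refine eq_zero_of_isLinearMap₃_of_span_eq_top
    (T := fun x y z ↦ br x (br y z) + br y (br z x) + br z (br x y)) ?_ ?_ ?_
    hspan hspan hspan ?_ x y z
  iterate 3 exact fun _ _ ↦ ⟨fun _ _ ↦ by simp only [map_add, LinearMap.add_apply]; abel,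
    fun _ _ ↦ by simp only [map_smul, LinearMap.smul_apply, smul_add]⟩
  intro i j k
  fin_cases i <;> fin_cases j <;> fin_cases k <;>
    simp only [Fin.reduceFinMk, Fin.zero_eta, Fin.mk_one, Fin.isValue, Fin.sum_univ_two, eps,
      Matrix.cons_val_zero, Matrix.cons_val_one, Matrix.cons_val,
      h.J_B, h.J_P, h.B_B, h.B_H, h.B_P, h.H_P, h.P_P, h.J_H,
      h.B_J, h.P_J, h.H_B, h.P_B, h.P_H, h.H_J, h.apply_self, map_smul, map_neg, map_zero,
      smul_neg, smul_smul, smul_zero, zero_smul, one_smul, neg_zero, add_zero, zero_add,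
      neg_smul, neg_neg, mul_zero, zero_mul, mul_one, one_mul, mul_neg, neg_mul] <;>
    module

end IsKinematicalAdSBracket

def gramMatrix (c τ Λ σ μ χ : ℝ) : Matrix (Fin 6) (Fin 6) ℝ :=
  !![-χ, 0, 0, -μ, 0, 0;
     0, c ^ 2 * τ ^ 2 * χ, 0, 0, c ^ 2 * μ, 0;
     0, 0, c ^ 2 * τ ^ 2 * χ, 0, 0, c ^ 2 * μ;
     -μ, 0, 0, -(σ * Λ ^ 2 * τ ^ 2 * χ), 0, 0;
     0, c ^ 2 * μ, 0, 0, σ * c ^ 2 * Λ ^ 2 * χ, 0;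
     0, 0, c ^ 2 * μ, 0, 0, σ * c ^ 2 * Λ ^ 2 * χ]

theorem det_gramMatrix (c τ Λ σ μ χ : ℝ) :
    (gramMatrix c τ Λ σ μ χ).det = -(c ^ 8 * (μ ^ 2 - σ * Λ ^ 2 * τ ^ 2 * χ ^ 2) ^ 3) := by
  simp [gramMatrix, Matrix.det_succ_row_zero, Fin.sum_univ_succ, Fin.succAbove]
  ring

namespace IsKinematicalAdSForm

variable {Bil : V →ₗ[ℝ] V →ₗ[ℝ] ℝ}

theorem J_H (hF : IsKinematicalAdSForm c τ Λ σ μ χ J H B P Bil) : Bil J H = -μ := by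
  rw [hF.symm, hF.H_J]

theorem B_P (hF : IsKinematicalAdSForm c τ Λ σ μ χ J H B P Bil) (a b : Fin 2) :
    Bil (B a) (P b) = (c ^ 2 * μ) * (if b = a then 1 else 0) := by
  rw [hF.symm, hF.P_B]

theorem B_J (hF : IsKinematicalAdSForm c τ Λ σ μ χ J H B P Bil) (a : Fin 2) :
    Bil (B a) J = 0 := by
  rw [hF.symm, hF.J_B]

theorem P_J (hF : IsKinematicalAdSForm c τ Λ σ μ χ J H B P Bil) (a : Fin 2) :
    Bil (P a) J = 0 := by
  rw [hF.symm, hF.J_P]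

theorem B_H (hF : IsKinematicalAdSForm c τ Λ σ μ χ J H B P Bil) (a : Fin 2) :
    Bil (B a) H = 0 := by
  rw [hF.symm, hF.H_B]

theorem P_H (hF : IsKinematicalAdSForm c τ Λ σ μ χ J H B P Bil) (a : Fin 2) :
    Bil (P a) H = 0 := by
  rw [hF.symm, hF.H_P]

set_option maxHeartbeats 4000000 in
theorem invariant {br : V →ₗ[ℝ] V →ₗ[ℝ] V} (hF : IsKinematicalAdSForm c τ Λ σ μ χ J H B P Bil)
    (h : IsKinematicalAdSBracket c τ Λ σ J H B P br)
    (hspan : Submodule.span ℝ (Set.range ![J, B 0, B 1, H, P 0, P 1]) = ⊤) (x y z : V) :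
    Bil (br z x) y + Bil x (br z y) = 0 := by
  refine eq_zero_of_isLinearMap₃_of_span_eq_top
    (T := fun x y z ↦ Bil (br z x) y + Bil x (br z y)) ?_ ?_ ?_ hspan hspan hspan ?_ x y z
  iterate 3 exact fun _ _ ↦ ⟨fun _ _ ↦ by simp only [map_add, LinearMap.add_apply]; abel,
    fun _ _ ↦ by simp only [map_smul, LinearMap.smul_apply, smul_add]⟩
  intro i j k
  fin_cases i <;> fin_cases j <;> fin_cases k <;>
    simp only [Fin.reduceFinMk, Fin.zero_eta, Fin.mk_one, Fin.isValue, Fin.sum_univ_two, eps,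
      Matrix.cons_val_zero, Matrix.cons_val_one, Matrix.cons_val,
      h.J_B, h.J_P, h.B_B, h.B_H, h.B_P, h.H_P, h.P_P, h.J_H,
      h.B_J, h.P_J, h.H_B, h.P_B, h.P_H, h.H_J, h.apply_self,
      hF.H_J, hF.P_B, hF.J_J, hF.B_B, hF.H_H, hF.P_P, hF.J_B, hF.J_P, hF.H_B, hF.H_P,
      hF.J_H, hF.B_P, hF.B_J, hF.P_J, hF.B_H, hF.P_H,
      map_add, map_smul, map_neg, map_zero, LinearMap.add_apply, LinearMap.smul_apply,
      LinearMap.neg_apply, LinearMap.zero_apply, smul_eq_mul, Fin.reduceEq, if_true, if_false,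
      neg_zero, add_zero, zero_add, mul_zero, zero_mul, mul_one, one_mul, mul_neg, neg_mul] <;>
    ring

theorem toMatrix₂_eq_gramMatrix (hF : IsKinematicalAdSForm c τ Λ σ μ χ J H B P Bil)
    (b : Module.Basis (Fin 6) ℝ V) (hb : ⇑b = ![J, B 0, B 1, H, P 0, P 1]) :
    LinearMap.toMatrix₂ b b Bil = gramMatrix c τ Λ σ μ χ := by
  ext i j
  rw [LinearMap.toMatrix₂_apply, hb]
  fin_cases i <;> fin_cases j <;>
    simp [gramMatrix, hF.H_J, hF.P_B, hF.J_J, hF.B_B, hF.H_H, hF.P_P, hF.J_B, hF.J_P, hF.H_B,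
      hF.H_P, hF.J_H, hF.B_P, hF.B_J, hF.P_J, hF.B_H, hF.P_H]

end IsKinematicalAdSForm

end Kinematical

theorem kinematical_ads_family_CS_general
    (c τ Λ σ μ χ : ℝ)
    (V : Type*) [AddCommGroup V] [Module ℝ V]
    (J H : V) (B P : Fin 2 → V)
    (hindep : LinearIndependent ℝ ![J, B 0, B 1, H, P 0, P 1])
    (hspan : Submodule.span ℝ (Set.range ![J, B 0, B 1, H, P 0, P 1]) = ⊤)
    (br : V →ₗ[ℝ] V →ₗ[ℝ] V)
    (hbr_anti : ∀ x y : V, br x y = - br y x)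
    (hJB : ∀ a, br J (B a) = ∑ m, eps a m • B m)
    (hJP : ∀ a, br J (P a) = ∑ m, eps a m • P m)
    (hBB : ∀ a b, br (B a) (B b) = (-(eps a b * τ ^ 2 * c ^ 2)) • J)
    (hBH : ∀ a, br (B a) H = ∑ m, (-(eps a m * τ ^ 2)) • P m)
    (hBP : ∀ a b, br (B a) (P b) = (-(eps a b * c ^ 2)) • H)
    (hHP : ∀ a, br H (P a) = ∑ m, (σ * Λ ^ 2 * eps a m) • B m)
    (hPP : ∀ a b, br (P a) (P b) = (-(σ * eps a b * Λ ^ 2 * c ^ 2)) • J)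
    (hJH : br J H = 0)
    (Bil : V →ₗ[ℝ] V →ₗ[ℝ] ℝ)
    (hsymm : ∀ x y : V, Bil x y = Bil y x)
    (hHJ : Bil H J = -μ)
    (hPBF : ∀ a b, Bil (P a) (B b) = (c ^ 2 * μ) * (if a = b then 1 else 0))
    (hJJ : Bil J J = -χ)
    (hBBF : ∀ a b, Bil (B a) (B b) = (c ^ 2 * τ ^ 2 * χ) * (if a = b then 1 else 0))
    (hHH : Bil H H = -(σ * Λ ^ 2 * τ ^ 2 * χ))
    (hPPF : ∀ a b, Bil (P a) (P b) = (σ * c ^ 2 * Λ ^ 2 * χ) * (if a = b then 1 else 0))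
    (hJBF : ∀ a, Bil J (B a) = 0)
    (hJPF : ∀ a, Bil J (P a) = 0)
    (hHBF : ∀ a, Bil H (B a) = 0)
    (hHPF : ∀ a, Bil H (P a) = 0) :
    (∀ x y z : V, br x (br y z) + br y (br z x) + br z (br x y) = 0) ∧
    (∀ x y z : V, Bil (br z x) y + Bil x (br z y) = 0) ∧
    ((∀ x : V, (∀ y : V, Bil x y = 0) → x = 0) ↔
      (c ≠ 0 ∧ μ ^ 2 - σ * Λ ^ 2 * τ ^ 2 * χ ^ 2 ≠ 0)) := by
  have hbr : IsKinematicalAdSBracket c τ Λ σ J H B P br :=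
    ⟨hbr_anti, hJB, hJP, hBB, hBH, hBP, hHP, hPP, hJH⟩
  have hF : IsKinematicalAdSForm c τ Λ σ μ χ J H B P Bil :=
    ⟨hsymm, hHJ, hPBF, hJJ, hBBF, hHH, hPPF, hJBF, hJPF, hHBF, hHPF⟩
  refine ⟨hbr.jacobi hspan, hF.invariant hbr hspan, ?_⟩
  let b := Module.Basis.mk hindep hspan.ge
  change Bil.SeparatingLeft ↔ _
  rw [LinearMap.separatingLeft_iff_det_ne_zero b,
    hF.toMatrix₂_eq_gramMatrix b (Module.Basis.coe_mk hindep hspan.ge), det_gramMatrix]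
  simp

/-- The (A)dS family of kinematical algebras in 2+1 dimensions with
contraction parameters `c, τ, Λ` and sign `σ`: the bracket satisfies the Jacobi identity;
for all `μ, χ` the indicated symmetric bilinear form is invariant; and it is nondegenerate
iff `c ≠ 0` and `μ² − σΛ²τ²χ² ≠ 0`. -/
theorem kinematical_ads_family_CS
    (c τ Λ σ μ χ : ℝ) (hσ : σ = 1 ∨ σ = -1)
    (V : Type*) [AddCommGroup V] [Module ℝ V]
    (J H : V) (B P : Fin 2 → V)
    (hindep : LinearIndependent ℝ ![J, B 0, B 1, H, P 0, P 1])
    (hspan : Submodule.span ℝ (Set.range ![J, B 0, B 1, H, P 0, P 1]) = ⊤)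
    (br : V →ₗ[ℝ] V →ₗ[ℝ] V)
    (hbr_anti : ∀ x y : V, br x y = - br y x)
    (hJB : ∀ a, br J (B a) = ∑ m, eps a m • B m)
    (hJP : ∀ a, br J (P a) = ∑ m, eps a m • P m)
    (hBB : ∀ a b, br (B a) (B b) = (-(eps a b * τ ^ 2 * c ^ 2)) • J)
    (hBH : ∀ a, br (B a) H = ∑ m, (-(eps a m * τ ^ 2)) • P m)
    (hBP : ∀ a b, br (B a) (P b) = (-(eps a b * c ^ 2)) • H)
    (hHP : ∀ a, br H (P a) = ∑ m, (σ * Λ ^ 2 * eps a m) • B m)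
    (hPP : ∀ a b, br (P a) (P b) = (-(σ * eps a b * Λ ^ 2 * c ^ 2)) • J)
    (hJH : br J H = 0)
    (Bil : V →ₗ[ℝ] V →ₗ[ℝ] ℝ)
    (hsymm : ∀ x y : V, Bil x y = Bil y x)
    (hHJ : Bil H J = -μ)
    (hPBF : ∀ a b, Bil (P a) (B b) = (c ^ 2 * μ) * (if a = b then 1 else 0))
    (hJJ : Bil J J = -χ)
    (hBBF : ∀ a b, Bil (B a) (B b) = (c ^ 2 * τ ^ 2 * χ) * (if a = b then 1 else 0))
    (hHH : Bil H H = -(σ * Λ ^ 2 * τ ^ 2 * χ))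
    (hPPF : ∀ a b, Bil (P a) (P b) = (σ * c ^ 2 * Λ ^ 2 * χ) * (if a = b then 1 else 0))
    (hJBF : ∀ a, Bil J (B a) = 0)
    (hJPF : ∀ a, Bil J (P a) = 0)
    (hHBF : ∀ a, Bil H (B a) = 0)
    (hHPF : ∀ a, Bil H (P a) = 0) :
    (∀ x y z : V, br x (br y z) + br y (br z x) + br z (br x y) = 0) ∧
    (∀ x y z : V, Bil (br z x) y + Bil x (br z y) = 0) ∧
    ((∀ x : V, (∀ y : V, Bil x y = 0) → x = 0) ↔
      (c ≠ 0 ∧ μ ^ 2 - σ * Λ ^ 2 * τ ^ 2 * χ ^ 2 ≠ 0)) :=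
  kinematical_ads_family_CS_general c τ Λ σ μ χ V J H B P hindep hspan br hbr_anti hJB hJP hBB hBH
    hBP hHP hPP hJH Bil hsymm hHJ hPBF hJJ hBBF hHH hPPF hJBF hJPF hHBF hHPF
end

section
/- Fix a real number Λ and a sign σ ∈ {1, −1}, and let g be the six-dimensional real Lie algebra with basis {J_0, J_1, J_2, P_0, P_1, P_2} and brackets [J_μ,J_ν] = ε_{μν}{}^ρ J_ρ, [J_μ,P_ν] = ε_{μν}{}^ρ P_ρ, [P_μ,P_ν] = σΛ² ε_{μν}{}^ρ J_ρ. Then: (i) for all real μ, χ the symmetric bilinear form given by B(J_ρ,J_λ) = χη_{ρλ}, B(P_ρ,J_λ) = μη_{ρλ}, B(P_ρ,P_λ) = σΛ²χη_{ρλ} is invariant; (ii) every invariant symmetric bilinear form on g is of this form for unique real μ, χ; and (iii) such a form is nondegenerate if and only if μ² − σΛ²χ² ≠ 0. -/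
/-- The 3d Minkowski metric `η = diag(−1,1,1)`. -/
def etaM : Fin 3 → Fin 3 → ℝ := ![![-1, 0, 0], ![0, 1, 0], ![0, 0, 1]]

/-- The totally antisymmetric symbol with `ε 0 1 2 = 1`. -/
def eps3 : Fin 3 → Fin 3 → Fin 3 → ℝ :=
  ![![![0, 0, 0], ![0, 0, 1], ![0, -1, 0]],
    ![![0, 0, -1], ![0, 0, 0], ![1, 0, 0]],
    ![![0, 1, 0], ![-1, 0, 0], ![0, 0, 0]]]

/-- `ε_{μν}{}^ρ = ε_{μνλ} η^{λρ}` (with `η⁻¹ = η`). -/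
def epsU (μ ν ρ : Fin 3) : ℝ := ∑ lam, eps3 μ ν lam * etaM lam ρ

/-!
Write `s = σΛ²`. In the basis `(J_ρ, P_ρ)`, indexed by `Fin 2 × Fin 3`, a symmetric form of the
given shape has Gram matrix `!![χ, μ; μ, sχ] ⊗ₖ η`, of determinant `(sχ² - μ²)³ (det η)²`; this
gives (iii), and it defines the form of (i). Invariance of that form only has to be checked on
generators, where it becomes the total antisymmetry of `ε_{μνλ} = ε_{μν}{}^ρ η_{ρλ}`.
Conversely, invariance under `ad J_μ` makes each of `B(J, J)`, `B(P, J)`, `B(P, P)` an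
`so(2,1)`-invariant pairing of two copies of the vector representation, hence a multiple of `η`;
invariance under `ad P_0`, evaluated on `(P_1, J_2)`, gives `B(P, P) = s B(J, J)`.
-/

lemma etaM_comm (i j : Fin 3) : etaM i j = etaM j i := by
  fin_cases i <;> fin_cases j <;> rfl

lemma sum_epsU_mul_etaM (i j k : Fin 3) : ∑ ρ, epsU i j ρ * etaM ρ k = eps3 i j k := by
  fin_cases i <;> fin_cases j <;> fin_cases k <;> simp [epsU, eps3, etaM, Fin.sum_univ_three]

lemma eps3_swap_left (i j k : Fin 3) : eps3 j i k = -eps3 i j k := by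
  fin_cases i <;> fin_cases j <;> fin_cases k <;> simp [eps3]

lemma eps3_swap_right (i j k : Fin 3) : eps3 i k j = -eps3 i j k := by
  fin_cases i <;> fin_cases j <;> fin_cases k <;> simp [eps3]

lemma eq_mul_etaM_of_forall_sum_epsU {f : Fin 3 → Fin 3 → ℝ}
    (hf : ∀ μ ν lam, ∑ ρ, epsU μ ν ρ * f ρ lam + ∑ ρ, epsU μ lam ρ * f ν ρ = 0) (i j : Fin 3) :
    f i j = f 1 1 * etaM i j := by
  -- these components kill the off-diagonal entries and give `f 0 0 = -f 1 1 = -f 2 2`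
  have e1 := hf 0 1 0
  have e2 := hf 0 2 0
  have e3 := hf 1 0 1
  have e4 := hf 1 2 1
  have e5 := hf 2 0 2
  have e6 := hf 2 1 2
  have e7 := hf 0 1 2
  have e8 := hf 1 2 0
  simp [epsU, eps3, etaM, Fin.sum_univ_three] at e1 e2 e3 e4 e5 e6 e7 e8
  fin_cases i <;> fin_cases j <;> simp [etaM] <;> linarith

section Contraction

variable {M : Type*} [AddCommGroup M] [Module ℝ M] {B : M →ₗ[ℝ] M →ₗ[ℝ] ℝ} {u w : Fin 3 → M}
  {c : ℝ}

lemma apply_sum_epsU_smul_left (hB : ∀ i j, B (u i) (w j) = c * etaM i j) (i j k : Fin 3) :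
    B (∑ ρ, epsU i j ρ • u ρ) (w k) = c * eps3 i j k := by
  simp only [map_sum, map_smul, LinearMap.sum_apply, LinearMap.smul_apply, smul_eq_mul, hB,
    ← sum_epsU_mul_etaM, Finset.mul_sum]
  exact Finset.sum_congr rfl fun _ _ => by ring

lemma apply_sum_epsU_smul_right (hB : ∀ i j, B (u i) (w j) = c * etaM i j) (i j k : Fin 3) :
    B (u k) (∑ ρ, epsU i j ρ • w ρ) = c * eps3 i j k := by
  simp only [map_sum, map_smul, smul_eq_mul, hB, etaM_comm k, ← sum_epsU_mul_etaM,
    Finset.mul_sum]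
  exact Finset.sum_congr rfl fun _ _ => by ring

end Contraction

lemma LinearMap.BilinForm.lieInvariant_of_span {R L : Type*} [CommRing R] [LieRing L]
    [LieAlgebra R L] {s : Set L} (hs : Submodule.span R s = ⊤) {Φ : LinearMap.BilinForm R L}
    (h : ∀ x ∈ s, ∀ y ∈ s, ∀ z ∈ s, Φ ⁅z, x⁆ y = -Φ x ⁅z, y⁆) : Φ.lieInvariant L := by
  rw [lieInvariant_iff, LieModule.mem_maxTrivSubmodule]
  have hgen : ∀ z ∈ s, ⁅z, Φ⁆ = 0 := fun z hz =>
    LinearMap.ext_on hs fun x hx => LinearMap.ext_on hs fun y hy => by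
      simp [h x hx y hy z hz]
  intro z
  have hz : z ∈ Submodule.span R s := hs ▸ Submodule.mem_top
  induction hz using Submodule.span_induction with
  | mem z hz => exact hgen z hz
  | zero => exact zero_lie Φ
  | add x y _ _ hx hy => rw [add_lie, hx, hy, add_zero]
  | smul c x _ hx => rw [smul_lie, hx, smul_zero]

section AdsBasis

variable {R V : Type*} [Ring R] [AddCommGroup V] [Module R V] {Jv Pv : Fin 3 → V}

lemma span_range_union_eq_top
    (hspan : Submodule.span R (Set.range ![Jv 0, Jv 1, Jv 2, Pv 0, Pv 1, Pv 2]) = ⊤) :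
    Submodule.span R (Set.range Jv ∪ Set.range Pv) = ⊤ :=
  top_unique <| hspan ▸ Submodule.span_mono (by rintro _ ⟨i, rfl⟩; fin_cases i <;> simp)

noncomputable def adsBasis (hindep : LinearIndependent R ![Jv 0, Jv 1, Jv 2, Pv 0, Pv 1, Pv 2])
    (hspan : Submodule.span R (Set.range ![Jv 0, Jv 1, Jv 2, Pv 0, Pv 1, Pv 2]) = ⊤) :
    Module.Basis (Fin 2 × Fin 3) R V :=
  (Module.Basis.mk hindep hspan.ge).reindex (finProdFinEquiv (m := 2) (n := 3)).symm

variable (hindep : LinearIndependent R ![Jv 0, Jv 1, Jv 2, Pv 0, Pv 1, Pv 2])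
  (hspan : Submodule.span R (Set.range ![Jv 0, Jv 1, Jv 2, Pv 0, Pv 1, Pv 2]) = ⊤)

@[simp] lemma adsBasis_zero (ρ : Fin 3) : adsBasis hindep hspan (0, ρ) = Jv ρ := by
  simp only [adsBasis, Module.Basis.reindex_apply, Equiv.symm_symm, Module.Basis.mk_apply]
  fin_cases ρ <;> rfl

@[simp] lemma adsBasis_one (ρ : Fin 3) : adsBasis hindep hspan (1, ρ) = Pv ρ := by
  simp only [adsBasis, Module.Basis.reindex_apply, Equiv.symm_symm, Module.Basis.mk_apply]
  fin_cases ρ <;> rfl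

end AdsBasis

open scoped Kronecker in
def adsGram (s mu chi : ℝ) : Matrix (Fin 2 × Fin 3) (Fin 2 × Fin 3) ℝ :=
  !![chi, mu; mu, s * chi] ⊗ₖ Matrix.of etaM

lemma adsGram_apply (s mu chi : ℝ) (a c : Fin 2) (ρ lam : Fin 3) :
    adsGram s mu chi (a, ρ) (c, lam) = !![chi, mu; mu, s * chi] a c * etaM ρ lam :=
  rfl

lemma adsGram_comm (s mu chi : ℝ) (p q : Fin 2 × Fin 3) :
    adsGram s mu chi p q = adsGram s mu chi q p := by
  obtain ⟨a, ρ⟩ := p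
  obtain ⟨c, lam⟩ := q
  rw [adsGram_apply, adsGram_apply, etaM_comm]
  fin_cases a <;> fin_cases c <;> rfl

lemma det_adsGram (s mu chi : ℝ) : (adsGram s mu chi).det = (s * chi ^ 2 - mu ^ 2) ^ 3 := by
  rw [adsGram, Matrix.det_kronecker, Matrix.det_fin_two_of, Matrix.det_fin_three]
  simp [etaM]
  ring

section AdsAlgebra

variable {g : Type*} [LieRing g] [LieAlgebra ℝ g]

/-- Here `s` stands for `σΛ²`. -/
structure AdsBrackets (s : ℝ) (Jv Pv : Fin 3 → g) : Prop where
  jj : ∀ μ ν, ⁅Jv μ, Jv ν⁆ = ∑ ρ, epsU μ ν ρ • Jv ρ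
  jp : ∀ μ ν, ⁅Jv μ, Pv ν⁆ = ∑ ρ, epsU μ ν ρ • Pv ρ
  pp : ∀ μ ν, ⁅Pv μ, Pv ν⁆ = ∑ ρ, (s * epsU μ ν ρ) • Jv ρ

def IsAdsForm (s : ℝ) (Jv Pv : Fin 3 → g) (mu chi : ℝ) (B : LinearMap.BilinForm ℝ g) : Prop :=
  (∀ ρ lam, B (Jv ρ) (Jv lam) = chi * etaM ρ lam) ∧
  (∀ ρ lam, B (Pv ρ) (Jv lam) = mu * etaM ρ lam) ∧
  (∀ ρ lam, B (Pv ρ) (Pv lam) = s * chi * etaM ρ lam)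

variable {s mu chi : ℝ} {Jv Pv : Fin 3 → g}

lemma AdsBrackets.pj (h : AdsBrackets s Jv Pv) (i j : Fin 3) :
    ⁅Pv i, Jv j⁆ = -∑ ρ, epsU j i ρ • Pv ρ := by
  rw [← lie_skew, h.jp]

lemma AdsBrackets.pp_eq_smul (h : AdsBrackets s Jv Pv) (i j : Fin 3) :
    ⁅Pv i, Pv j⁆ = s • ∑ ρ, epsU i j ρ • Jv ρ := by
  simp only [h.pp, Finset.smul_sum, mul_smul]

lemma lieInvariant_of_isAdsForm (hbr : AdsBrackets s Jv Pv)
    (hspan : Submodule.span ℝ (Set.range Jv ∪ Set.range Pv) = ⊤) {B : LinearMap.BilinForm ℝ g}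
    (hB : IsAdsForm s Jv Pv mu chi B) (hBJP : ∀ ρ lam, B (Jv ρ) (Pv lam) = mu * etaM ρ lam) :
    B.lieInvariant g := by
  obtain ⟨hBJJ, hBPJ, hBPP⟩ := hB
  refine LinearMap.BilinForm.lieInvariant_of_span hspan ?_
  rintro _ (⟨m, rfl⟩ | ⟨m, rfl⟩) _ (⟨n, rfl⟩ | ⟨n, rfl⟩) _ (⟨l, rfl⟩ | ⟨l, rfl⟩) <;>
    simp only [hbr.jj, hbr.jp, hbr.pj, hbr.pp_eq_smul, map_neg, map_smul, LinearMap.neg_apply,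
      LinearMap.smul_apply, smul_eq_mul, apply_sum_epsU_smul_left hBJJ,
      apply_sum_epsU_smul_left hBJP, apply_sum_epsU_smul_left hBPJ,
      apply_sum_epsU_smul_left hBPP, apply_sum_epsU_smul_right hBJJ,
      apply_sum_epsU_smul_right hBJP, apply_sum_epsU_smul_right hBPJ,
      apply_sum_epsU_smul_right hBPP]
  all_goals
    simp only [eps3_swap_left l m n, eps3_swap_left l n m, eps3_swap_right l m n]
    ring

lemma apply_eq_mul_etaM_of_lieInvariant {B : LinearMap.BilinForm ℝ g} (hB : B.lieInvariant g)
    {z u w : Fin 3 → g} (hu : ∀ μ ν, ⁅z μ, u ν⁆ = ∑ ρ, epsU μ ν ρ • u ρ)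
    (hw : ∀ μ ν, ⁅z μ, w ν⁆ = ∑ ρ, epsU μ ν ρ • w ρ) (i j : Fin 3) :
    B (u i) (w j) = B (u 1) (w 1) * etaM i j := by
  refine eq_mul_etaM_of_forall_sum_epsU (f := fun i j => B (u i) (w j)) (fun μ ν lam => ?_) i j
  have h := hB (z μ) (u ν) (w lam)
  simp only [hu, hw, map_sum, map_smul, LinearMap.sum_apply, LinearMap.smul_apply,
    smul_eq_mul] at h
  linarith

lemma existsUnique_isAdsForm_of_lieInvariant (hbr : AdsBrackets s Jv Pv)
    {B : LinearMap.BilinForm ℝ g} (hB : B.lieInvariant g) :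
    ∃! mc : ℝ × ℝ, IsAdsForm s Jv Pv mc.1 mc.2 B := by
  have hJJ := apply_eq_mul_etaM_of_lieInvariant hB hbr.jj hbr.jj
  have hPJ := apply_eq_mul_etaM_of_lieInvariant hB hbr.jp hbr.jj
  have hPP := apply_eq_mul_etaM_of_lieInvariant hB hbr.jp hbr.jp
  have hlink : B (Pv 1) (Pv 1) = s * B (Jv 1) (Jv 1) := by
    have h := hB (Pv 0) (Pv 1) (Jv 2)
    rw [hbr.pp_eq_smul, hbr.pj, map_smul, LinearMap.smul_apply, map_neg,
      apply_sum_epsU_smul_left hJJ, apply_sum_epsU_smul_right hPP] at h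
    simpa [eps3] using h.symm
  refine ⟨(B (Pv 1) (Jv 1), B (Jv 1) (Jv 1)), ⟨hJJ, hPJ, fun i j => by rw [hPP, hlink]⟩, ?_⟩
  rintro ⟨mu, chi⟩ ⟨hchi, hmu, -⟩
  simp [hchi 1 1, hmu 1 1, etaM]

lemma exists_isAdsForm_lieInvariant (hbr : AdsBrackets s Jv Pv)
    (hindep : LinearIndependent ℝ ![Jv 0, Jv 1, Jv 2, Pv 0, Pv 1, Pv 2])
    (hspan : Submodule.span ℝ (Set.range ![Jv 0, Jv 1, Jv 2, Pv 0, Pv 1, Pv 2]) = ⊤)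
    (mu chi : ℝ) :
    ∃ B : LinearMap.BilinForm ℝ g,
      (∀ x y, B x y = B y x) ∧ IsAdsForm s Jv Pv mu chi B ∧ B.lieInvariant g := by
  set b := adsBasis hindep hspan
  set B := Matrix.toLinearMap₂ b b (adsGram s mu chi)
  have hB : ∀ p q, B (b p) (b q) = adsGram s mu chi p q := Matrix.toLinearMap₂_apply_basis b b _
  have hsym : ∀ x y, B x y = B y x := fun x y =>
    LinearMap.congr_fun₂ (LinearMap.ext_basis b b fun p q => by
      rw [LinearMap.flip_apply, hB, hB, adsGram_comm] : B.flip = B) y x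
  have hval : ∀ a c ρ lam, B (b (a, ρ)) (b (c, lam)) = !![chi, mu; mu, s * chi] a c * etaM ρ lam :=
    fun a c ρ lam => hB (a, ρ) (c, lam)
  have hform : IsAdsForm s Jv Pv mu chi B :=
    ⟨fun ρ lam => by simpa [b] using hval 0 0 ρ lam, fun ρ lam => by simpa [b] using hval 1 0 ρ lam,
      fun ρ lam => by simpa [b] using hval 1 1 ρ lam⟩
  have hJP : ∀ ρ lam, B (Jv ρ) (Pv lam) = mu * etaM ρ lam := fun ρ lam => by
    simpa [b] using hval 0 1 ρ lam
  exact ⟨B, hsym, hform, lieInvariant_of_isAdsForm hbr (span_range_union_eq_top hspan) hform hJP⟩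

lemma separatingLeft_iff_of_isAdsForm
    (hindep : LinearIndependent ℝ ![Jv 0, Jv 1, Jv 2, Pv 0, Pv 1, Pv 2])
    (hspan : Submodule.span ℝ (Set.range ![Jv 0, Jv 1, Jv 2, Pv 0, Pv 1, Pv 2]) = ⊤)
    {B : LinearMap.BilinForm ℝ g} (hsym : ∀ x y, B x y = B y x)
    (hB : IsAdsForm s Jv Pv mu chi B) :
    B.SeparatingLeft ↔ mu ^ 2 - s * chi ^ 2 ≠ 0 := by
  obtain ⟨hJJ, hPJ, hPP⟩ := hB
  have hgram : LinearMap.toMatrix₂ (adsBasis hindep hspan) (adsBasis hindep hspan) B =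
      adsGram s mu chi := by
    ext ⟨a, ρ⟩ ⟨c, lam⟩
    rw [LinearMap.toMatrix₂_apply, adsGram_apply]
    fin_cases a <;> fin_cases c
    · simp [hJJ]
    · simp [hsym (Jv ρ), hPJ, etaM_comm lam]
    · simp [hPJ]
    · simp [hPP]
  rw [LinearMap.separatingLeft_iff_det_ne_zero (adsBasis hindep hspan), hgram, det_adsGram,
    pow_ne_zero_iff three_ne_zero, sub_ne_zero, sub_ne_zero, ne_comm]

end AdsAlgebra

theorem ads_invariant_metric_classification_general
    (Λ σ : ℝ)
    (g : Type*) [LieRing g] [LieAlgebra ℝ g]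
    (Jv Pv : Fin 3 → g)
    (hindep : LinearIndependent ℝ ![Jv 0, Jv 1, Jv 2, Pv 0, Pv 1, Pv 2])
    (hspan : Submodule.span ℝ (Set.range ![Jv 0, Jv 1, Jv 2, Pv 0, Pv 1, Pv 2]) = ⊤)
    (hJJ : ∀ μ ν, ⁅Jv μ, Jv ν⁆ = ∑ ρ, epsU μ ν ρ • Jv ρ)
    (hJP : ∀ μ ν, ⁅Jv μ, Pv ν⁆ = ∑ ρ, epsU μ ν ρ • Pv ρ)
    (hPP : ∀ μ ν, ⁅Pv μ, Pv ν⁆ = ∑ ρ, (σ * Λ ^ 2 * epsU μ ν ρ) • Jv ρ) :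
    -- (i) existence and invariance
    (∀ mu chi : ℝ, ∃ Bil : g →ₗ[ℝ] g →ₗ[ℝ] ℝ,
        (∀ x y : g, Bil x y = Bil y x) ∧
        (∀ ρ lam, Bil (Jv ρ) (Jv lam) = chi * etaM ρ lam) ∧
        (∀ ρ lam, Bil (Pv ρ) (Jv lam) = mu * etaM ρ lam) ∧
        (∀ ρ lam, Bil (Pv ρ) (Pv lam) = σ * Λ ^ 2 * chi * etaM ρ lam) ∧
        (∀ x y z : g, Bil ⁅z, x⁆ y + Bil x ⁅z, y⁆ = 0)) ∧
    -- (ii) every invariant symmetric form is of this shape, for unique (μ,χ)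
    (∀ Bil : g →ₗ[ℝ] g →ₗ[ℝ] ℝ,
        (∀ x y : g, Bil x y = Bil y x) →
        (∀ x y z : g, Bil ⁅z, x⁆ y + Bil x ⁅z, y⁆ = 0) →
        ∃! mc : ℝ × ℝ,
          (∀ ρ lam, Bil (Jv ρ) (Jv lam) = mc.2 * etaM ρ lam) ∧
          (∀ ρ lam, Bil (Pv ρ) (Jv lam) = mc.1 * etaM ρ lam) ∧
          (∀ ρ lam, Bil (Pv ρ) (Pv lam) = σ * Λ ^ 2 * mc.2 * etaM ρ lam)) ∧
    -- (iii) nondegeneracy criterion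
    (∀ (mu chi : ℝ) (Bil : g →ₗ[ℝ] g →ₗ[ℝ] ℝ),
        (∀ x y : g, Bil x y = Bil y x) →
        (∀ x y z : g, Bil ⁅z, x⁆ y + Bil x ⁅z, y⁆ = 0) →
        (∀ ρ lam, Bil (Jv ρ) (Jv lam) = chi * etaM ρ lam) →
        (∀ ρ lam, Bil (Pv ρ) (Jv lam) = mu * etaM ρ lam) →
        (∀ ρ lam, Bil (Pv ρ) (Pv lam) = σ * Λ ^ 2 * chi * etaM ρ lam) →
        ((∀ x : g, (∀ y : g, Bil x y = 0) → x = 0) ↔ mu ^ 2 - σ * Λ ^ 2 * chi ^ 2 ≠ 0)) := by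
  have hbr : AdsBrackets (σ * Λ ^ 2) Jv Pv := ⟨hJJ, hJP, hPP⟩
  refine ⟨fun mu chi => ?_, fun B _ hinv => ?_, fun mu chi B hsym _ hBJJ hBPJ hBPP => ?_⟩
  · obtain ⟨B, hsym, ⟨hBJJ, hBPJ, hBPP⟩, hinv⟩ :=
      exists_isAdsForm_lieInvariant hbr hindep hspan mu chi
    exact ⟨B, hsym, hBJJ, hBPJ, hBPP, fun x y z => by rw [hinv z x y, neg_add_cancel]⟩
  · exact existsUnique_isAdsForm_of_lieInvariant hbr fun z x y =>
      eq_neg_of_add_eq_zero_left (hinv x y z)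
  · exact separatingLeft_iff_of_isAdsForm hindep hspan hsym ⟨hBJJ, hBPJ, hBPP⟩

/-- For the three-dimensional (A)dS algebra with brackets
`[J_μ,J_ν] = ε_{μν}{}^ρ J_ρ`, `[J_μ,P_ν] = ε_{μν}{}^ρ P_ρ`, `[P_μ,P_ν] = σΛ²ε_{μν}{}^ρ J_ρ`:
(i) for all `μ, χ` the indicated symmetric bilinear form is invariant; (ii) every invariant
symmetric bilinear form is of this shape for unique `(μ,χ)`; and (iii) such a form is
nondegenerate iff `μ² − σΛ²χ² ≠ 0`. -/
theorem ads_invariant_metric_classification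
    (Λ σ : ℝ) (hσ : σ = 1 ∨ σ = -1)
    (g : Type*) [LieRing g] [LieAlgebra ℝ g]
    (Jv Pv : Fin 3 → g)
    (hindep : LinearIndependent ℝ ![Jv 0, Jv 1, Jv 2, Pv 0, Pv 1, Pv 2])
    (hspan : Submodule.span ℝ (Set.range ![Jv 0, Jv 1, Jv 2, Pv 0, Pv 1, Pv 2]) = ⊤)
    (hJJ : ∀ μ ν, ⁅Jv μ, Jv ν⁆ = ∑ ρ, epsU μ ν ρ • Jv ρ)
    (hJP : ∀ μ ν, ⁅Jv μ, Pv ν⁆ = ∑ ρ, epsU μ ν ρ • Pv ρ)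
    (hPP : ∀ μ ν, ⁅Pv μ, Pv ν⁆ = ∑ ρ, (σ * Λ ^ 2 * epsU μ ν ρ) • Jv ρ) :
    -- (i) existence and invariance
    (∀ mu chi : ℝ, ∃ Bil : g →ₗ[ℝ] g →ₗ[ℝ] ℝ,
        (∀ x y : g, Bil x y = Bil y x) ∧
        (∀ ρ lam, Bil (Jv ρ) (Jv lam) = chi * etaM ρ lam) ∧
        (∀ ρ lam, Bil (Pv ρ) (Jv lam) = mu * etaM ρ lam) ∧
        (∀ ρ lam, Bil (Pv ρ) (Pv lam) = σ * Λ ^ 2 * chi * etaM ρ lam) ∧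
        (∀ x y z : g, Bil ⁅z, x⁆ y + Bil x ⁅z, y⁆ = 0)) ∧
    -- (ii) every invariant symmetric form is of this shape, for unique (μ,χ)
    (∀ Bil : g →ₗ[ℝ] g →ₗ[ℝ] ℝ,
        (∀ x y : g, Bil x y = Bil y x) →
        (∀ x y z : g, Bil ⁅z, x⁆ y + Bil x ⁅z, y⁆ = 0) →
        ∃! mc : ℝ × ℝ,
          (∀ ρ lam, Bil (Jv ρ) (Jv lam) = mc.2 * etaM ρ lam) ∧
          (∀ ρ lam, Bil (Pv ρ) (Jv lam) = mc.1 * etaM ρ lam) ∧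
          (∀ ρ lam, Bil (Pv ρ) (Pv lam) = σ * Λ ^ 2 * mc.2 * etaM ρ lam)) ∧
    -- (iii) nondegeneracy criterion
    (∀ (mu chi : ℝ) (Bil : g →ₗ[ℝ] g →ₗ[ℝ] ℝ),
        (∀ x y : g, Bil x y = Bil y x) →
        (∀ x y z : g, Bil ⁅z, x⁆ y + Bil x ⁅z, y⁆ = 0) →
        (∀ ρ lam, Bil (Jv ρ) (Jv lam) = chi * etaM ρ lam) →
        (∀ ρ lam, Bil (Pv ρ) (Jv lam) = mu * etaM ρ lam) →
        (∀ ρ lam, Bil (Pv ρ) (Pv lam) = σ * Λ ^ 2 * chi * etaM ρ lam) →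
        ((∀ x : g, (∀ y : g, Bil x y = 0) → x = 0) ↔ mu ^ 2 - σ * Λ ^ 2 * chi ^ 2 ≠ 0)) :=
  ads_invariant_metric_classification_general Λ σ g Jv Pv hindep hspan hJJ hJP hPP
end

section
/- Fix a real number Λ and a sign σ ∈ {1, −1}, and let g be the six-dimensional real Lie algebra with basis {J, B_1, B_2, H, P_1, P_2} and nonzero brackets [J,B_a] = ε_{am}B_m, [J,P_a] = ε_{am}P_m, [B_a,H] = −ε_{am}P_m, [H,P_a] = σΛ²ε_{am}B_m (the (A)dS-Galilei algebra; the Galilei algebra when Λ = 0). Then every invariant symmetric bilinear form B on g satisfies B(x,y) = 0 whenever x lies in the span of {B_1, B_2, P_1, P_2}; consequently g admits no nondegenerate invariant symmetric bilinear form. -/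
open LinearMap (BilinForm)

namespace LinearMap.BilinForm.lieInvariant

variable {R L : Type*} [CommRing R] [LieRing L] [LieAlgebra R L] {Φ : BilinForm R L}

theorem apply_lie_self (hΦ : Φ.lieInvariant L) (z x : L) : Φ ⁅z, x⁆ z = 0 := by
  rw [hΦ, lie_self, map_zero, neg_zero]

theorem apply_lie_left (hΦ : Φ.lieInvariant L) (z x y : L) : Φ ⁅z, x⁆ y = Φ z ⁅x, y⁆ := by
  rw [← lie_skew, map_neg, LinearMap.neg_apply, hΦ, neg_neg]

end LinearMap.BilinForm.lieInvariant

theorem apply_eq_zero_of_apply_sum_eps_smul_eq_zero {M N : Type*} [AddCommGroup M] [Module ℝ M]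
    [AddCommGroup N] [Module ℝ N] {v : Fin 2 → M} {f : M →ₗ[ℝ] N}
    (h : ∀ b, f (∑ m, eps b m • v m) = 0) (a : Fin 2) : f (v a) = 0 := by
  have h0 := h 0
  have h1 := h 1
  simp only [eps, Fin.sum_univ_two] at h0 h1
  fin_cases a
  exacts [by simpa using h1, by simpa using h0]

section Doublet

variable {g : Type*} [LieRing g] [LieAlgebra ℝ g] {Φ : BilinForm ℝ g} {z : g} {u v : Fin 2 → g}

theorem apply_eq_zero_of_lie_eq_sum_eps (huv : ∀ a, ⁅z, u a⁆ = ∑ m, eps a m • v m) {y : g}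
    (hy : ∀ b, Φ ⁅z, u b⁆ y = 0) (a : Fin 2) : Φ (v a) y = 0 :=
  apply_eq_zero_of_apply_sum_eps_smul_eq_zero (f := Φ.flip y) (fun b => by simpa [huv] using hy b) a

theorem apply_eq_zero_of_lie_eq_sum_eps_self (hΦ : Φ.lieInvariant g)
    (huv : ∀ a, ⁅z, u a⁆ = ∑ m, eps a m • v m) (a : Fin 2) : Φ (v a) z = 0 :=
  apply_eq_zero_of_lie_eq_sum_eps huv (fun b => hΦ.apply_lie_self z (u b)) a

theorem apply_eq_zero_of_rotation (hΦ : Φ.lieInvariant g)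
    (hv : ∀ a, ⁅z, v a⁆ = ∑ m, eps a m • v m) {y : g} (hy : ∀ b, Φ z ⁅v b, y⁆ = 0) (a : Fin 2) :
    Φ (v a) y = 0 :=
  apply_eq_zero_of_lie_eq_sum_eps hv (fun b => (hΦ.apply_lie_left z (v b) y).trans (hy b)) a

theorem apply_eq_zero_of_rotation_of_lie_eq_zero (hΦ : Φ.lieInvariant g)
    (hv : ∀ a, ⁅z, v a⁆ = ∑ m, eps a m • v m) {y : g} (hy : ∀ b, ⁅v b, y⁆ = 0) (a : Fin 2) :
    Φ (v a) y = 0 :=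
  apply_eq_zero_of_rotation hΦ hv (fun b => by rw [hy b, map_zero]) a

end Doublet

theorem span_boosts_momenta_le_ker {g : Type*} [LieRing g] [LieAlgebra ℝ g] {J H : g}
    {B P : Fin 2 → g} (hspan : Submodule.span ℝ (Set.range ![J, B 0, B 1, H, P 0, P 1]) = ⊤)
    (hJB : ∀ a, ⁅J, B a⁆ = ∑ m, eps a m • B m)
    (hJP : ∀ a, ⁅J, P a⁆ = ∑ m, eps a m • P m)
    (hBH : ∀ a, ⁅B a, H⁆ = ∑ m, (-(eps a m)) • P m)
    (hBB : ∀ a b, ⁅B a, B b⁆ = 0) (hBP : ∀ a b, ⁅B a, P b⁆ = 0) (hPP : ∀ a b, ⁅P a, P b⁆ = 0)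
    {Φ : BilinForm ℝ g} (hsymm : Φ.IsSymm) (hΦ : Φ.lieInvariant g) :
    Submodule.span ℝ ({B 0, B 1, P 0, P 1} : Set g) ≤ LinearMap.ker Φ := by
  have hHB : ∀ a, ⁅H, B a⁆ = ∑ m, eps a m • P m := fun a => by
    rw [← lie_skew, hBH]
    simp only [neg_smul, Finset.sum_neg_distrib, neg_neg]
  have hPB : ∀ a b, ⁅P a, B b⁆ = 0 := fun a b => by rw [← lie_skew, hBP, neg_zero]
  have ΦBJ := apply_eq_zero_of_lie_eq_sum_eps_self hΦ hJB
  have ΦPJ := apply_eq_zero_of_lie_eq_sum_eps_self hΦ hJP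
  have ΦPH := apply_eq_zero_of_lie_eq_sum_eps_self hΦ hHB
  have ΦBH : ∀ a, Φ (B a) H = 0 := apply_eq_zero_of_rotation hΦ hJB fun b => by
    simp [hBH, hsymm.eq J, ΦPJ]
  have ΦBB a c := apply_eq_zero_of_rotation_of_lie_eq_zero hΦ hJB (fun b => hBB b c) a
  have ΦBP a c := apply_eq_zero_of_rotation_of_lie_eq_zero hΦ hJB (fun b => hBP b c) a
  have ΦPB a c := apply_eq_zero_of_rotation_of_lie_eq_zero hΦ hJP (fun b => hPB b c) a
  have ΦPP a c := apply_eq_zero_of_rotation_of_lie_eq_zero hΦ hJP (fun b => hPP b c) a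
  have hB a : Φ (B a) = 0 := LinearMap.ext_on_range hspan fun i => by
    fin_cases i
    exacts [ΦBJ a, ΦBB a 0, ΦBB a 1, ΦBH a, ΦBP a 0, ΦBP a 1]
  have hP a : Φ (P a) = 0 := LinearMap.ext_on_range hspan fun i => by
    fin_cases i
    exacts [ΦPJ a, ΦPB a 0, ΦPB a 1, ΦPH a, ΦPP a 0, ΦPP a 1]
  rw [Submodule.span_le]
  rintro _ (rfl | rfl | rfl | rfl)
  exacts [hB 0, hB 1, hP 0, hP 1]

theorem galilei_no_invariant_metric_general
    (g : Type*) [LieRing g] [LieAlgebra ℝ g]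
    (J H : g) (B P : Fin 2 → g)
    (hindep : LinearIndependent ℝ ![J, B 0, B 1, H, P 0, P 1])
    (hspan : Submodule.span ℝ (Set.range ![J, B 0, B 1, H, P 0, P 1]) = ⊤)
    (hJB : ∀ a, ⁅J, B a⁆ = ∑ m, eps a m • B m)
    (hJP : ∀ a, ⁅J, P a⁆ = ∑ m, eps a m • P m)
    (hBH : ∀ a, ⁅B a, H⁆ = ∑ m, (-(eps a m)) • P m)
    (hBB : ∀ a b, ⁅B a, B b⁆ = 0)
    (hBP : ∀ a b, ⁅B a, P b⁆ = 0)
    (hPP : ∀ a b, ⁅P a, P b⁆ = 0) :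
    (∀ Bil : g →ₗ[ℝ] g →ₗ[ℝ] ℝ,
        (∀ x y : g, Bil x y = Bil y x) →
        (∀ x y z : g, Bil ⁅z, x⁆ y + Bil x ⁅z, y⁆ = 0) →
        ∀ x ∈ Submodule.span ℝ ({B 0, B 1, P 0, P 1} : Set g), ∀ y : g, Bil x y = 0) ∧
    ¬ ∃ Bil : g →ₗ[ℝ] g →ₗ[ℝ] ℝ,
        (∀ x y : g, Bil x y = Bil y x) ∧
        (∀ x y z : g, Bil ⁅z, x⁆ y + Bil x ⁅z, y⁆ = 0) ∧
        (∀ x : g, (∀ y : g, Bil x y = 0) → x = 0) := by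
  have radical : ∀ Φ : g →ₗ[ℝ] g →ₗ[ℝ] ℝ,
      (∀ x y : g, Φ x y = Φ y x) →
      (∀ x y z : g, Φ ⁅z, x⁆ y + Φ x ⁅z, y⁆ = 0) →
      ∀ x ∈ Submodule.span ℝ ({B 0, B 1, P 0, P 1} : Set g), ∀ y : g, Φ x y = 0 := by
    intro Φ hsymm hinv x hx
    have hΦ : BilinForm.lieInvariant g Φ := fun z x y => eq_neg_of_add_eq_zero_left (hinv x y z)
    exact LinearMap.congr_fun
      (span_boosts_momenta_le_ker hspan hJB hJP hBH hBB hBP hPP ⟨hsymm⟩ hΦ hx)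
  refine ⟨radical, fun ⟨Φ, hsymm, hinv, hnondeg⟩ => hindep.ne_zero 1 ?_⟩
  exact hnondeg (B 0) (radical Φ hsymm hinv _ (Submodule.subset_span (by simp)))

/-- For the (A)dS-Galilei algebra in 2+1 dimensions (the Galilei algebra when
`Λ = 0`), every invariant symmetric bilinear form vanishes against the span of
`{B_1, B_2, P_1, P_2}`; consequently there is no nondegenerate invariant symmetric bilinear
form. -/
theorem galilei_no_invariant_metric
    (Λ σ : ℝ) (hσ : σ = 1 ∨ σ = -1)
    (g : Type*) [LieRing g] [LieAlgebra ℝ g]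
    (J H : g) (B P : Fin 2 → g)
    (hindep : LinearIndependent ℝ ![J, B 0, B 1, H, P 0, P 1])
    (hspan : Submodule.span ℝ (Set.range ![J, B 0, B 1, H, P 0, P 1]) = ⊤)
    (hJB : ∀ a, ⁅J, B a⁆ = ∑ m, eps a m • B m)
    (hJP : ∀ a, ⁅J, P a⁆ = ∑ m, eps a m • P m)
    (hBH : ∀ a, ⁅B a, H⁆ = ∑ m, (-(eps a m)) • P m)
    (hHP : ∀ a, ⁅H, P a⁆ = ∑ m, (σ * Λ ^ 2 * eps a m) • B m)
    (hJH : ⁅J, H⁆ = 0)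
    (hBB : ∀ a b, ⁅B a, B b⁆ = 0)
    (hBP : ∀ a b, ⁅B a, P b⁆ = 0)
    (hPP : ∀ a b, ⁅P a, P b⁆ = 0) :
    (∀ Bil : g →ₗ[ℝ] g →ₗ[ℝ] ℝ,
        (∀ x y : g, Bil x y = Bil y x) →
        (∀ x y z : g, Bil ⁅z, x⁆ y + Bil x ⁅z, y⁆ = 0) →
        ∀ x ∈ Submodule.span ℝ ({B 0, B 1, P 0, P 1} : Set g), ∀ y : g, Bil x y = 0) ∧
    ¬ ∃ Bil : g →ₗ[ℝ] g →ₗ[ℝ] ℝ,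
        (∀ x y : g, Bil x y = Bil y x) ∧
        (∀ x y z : g, Bil ⁅z, x⁆ y + Bil x ⁅z, y⁆ = 0) ∧
        (∀ x : g, (∀ y : g, Bil x y = 0) → x = 0) :=
  galilei_no_invariant_metric_general g J H B P hindep hspan hJB hJP hBH hBB hBP hPP
end

section
/- Let ac be the six-dimensional real Lie algebra with basis {J, B_1, B_2, H, P_1, P_2} and nonzero brackets [J,B_a] = ε_{am}B_m, [J,P_a] = ε_{am}P_m, [B_a,P_b] = −ε_{ab}H, [H,P_a] = ε_{am}B_m, [P_a,P_b] = −ε_{ab}J (the three-dimensional AdS-Carroll algebra), and let p be the six-dimensional real Lie algebra with basis {J, B_1, B_2, H, P_1, P_2} and nonzero brackets [J,B_a] = ε_{am}B_m, [J,P_a] = ε_{am}P_m, [B_a,B_b] = −ε_{ab}J, [B_a,H] = −ε_{am}P_m, [B_a,P_b] = −ε_{ab}H (the three-dimensional Poincaré algebra). Then the linear map determined by J ↦ J, H ↦ H, B_a ↦ P_a, P_a ↦ B_a is an isomorphism of Lie algebras from ac onto p. -/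
/-!
The swap `B ↔ P` carries the AdS-Carroll brackets exactly onto the Poincaré ones (using only the
antisymmetry of `ε`), so the linear isomorphism matching the two bases preserves the bracket of
any two basis vectors, hence of any two elements by bilinearity.
-/

open Submodule

lemma eps_swap (a b : Fin 2) : eps b a = -eps a b := by
  fin_cases a <;> fin_cases b <;> simp [eps]

section LieHom

variable {R L L' : Type*} [CommRing R] [LieRing L] [LieAlgebra R L] [LieRing L'] [LieAlgebra R L']

lemma LinearMap.map_lie_swap {f : L →ₗ[R] L'} {x y : L} (h : f ⁅x, y⁆ = ⁅f x, f y⁆) :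
    f ⁅y, x⁆ = ⁅f y, f x⁆ := by
  rw [← lie_skew, map_neg, h, lie_skew]

lemma LinearMap.map_lie_of_span_eq_top {f : L →ₗ[R] L'} {s : Set L} (hs : span R s = ⊤)
    (h : ∀ x ∈ s, ∀ y ∈ s, f ⁅x, y⁆ = ⁅f x, f y⁆) (x y : L) : f ⁅x, y⁆ = ⁅f x, f y⁆ := by
  have hx : x ∈ span R s := hs ▸ mem_top
  have hy : y ∈ span R s := hs ▸ mem_top
  induction hx, hy using span_induction₂ with
  | mem_mem x y hx hy => exact h x hx y hy
  | zero_left | zero_right => simp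
  | add_left x y z _ _ _ hxz hyz => simp only [add_lie, map_add, hxz, hyz]
  | add_right x y z _ _ _ hxy hxz => simp only [lie_add, map_add, hxy, hxz]
  | smul_left r x y _ _ hxy => simp only [smul_lie, map_smul, hxy]
  | smul_right r x y _ _ hxy => simp only [lie_smul, map_smul, hxy]

end LieHom

lemma LinearIndependent.exists_linearEquiv_apply_eq {R M N ι : Type*} [Semiring R] [AddCommMonoid M]
    [Module R M] [AddCommMonoid N] [Module R N] {v : ι → M} {w : ι → N}
    (hv : LinearIndependent R v) (hv_span : span R (Set.range v) = ⊤)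
    (hw : LinearIndependent R w) (hw_span : span R (Set.range w) = ⊤) (σ : ι ≃ ι) :
    ∃ e : M ≃ₗ[R] N, ∀ i, e (v i) = w (σ i) :=
  ⟨(Module.Basis.mk hv hv_span.ge).equiv (Module.Basis.mk hw hw_span.ge) σ, fun i => by
    rw [← Module.Basis.mk_apply hv hv_span.ge i, Module.Basis.equiv_apply, Module.Basis.mk_apply]⟩

section Relations

variable {L : Type*} [LieRing L] [LieAlgebra ℝ L]

structure AdSCarrollRelations (J H : L) (B P : Fin 2 → L) : Prop where
  lie_J_B : ∀ a, ⁅J, B a⁆ = ∑ m, eps a m • B m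
  lie_J_P : ∀ a, ⁅J, P a⁆ = ∑ m, eps a m • P m
  lie_B_P : ∀ a b, ⁅B a, P b⁆ = (-(eps a b)) • H
  lie_H_P : ∀ a, ⁅H, P a⁆ = ∑ m, eps a m • B m
  lie_P_P : ∀ a b, ⁅P a, P b⁆ = (-(eps a b)) • J
  lie_B_B : ∀ a b, ⁅B a, B b⁆ = 0
  lie_B_H : ∀ a, ⁅B a, H⁆ = 0
  lie_J_H : ⁅J, H⁆ = 0

structure PoincareRelations (J H : L) (B P : Fin 2 → L) : Prop where
  lie_J_B : ∀ a, ⁅J, B a⁆ = ∑ m, eps a m • B m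
  lie_J_P : ∀ a, ⁅J, P a⁆ = ∑ m, eps a m • P m
  lie_B_B : ∀ a b, ⁅B a, B b⁆ = (-(eps a b)) • J
  lie_B_H : ∀ a, ⁅B a, H⁆ = ∑ m, (-(eps a m)) • P m
  lie_B_P : ∀ a b, ⁅B a, P b⁆ = (-(eps a b)) • H
  lie_H_P : ∀ a, ⁅H, P a⁆ = 0
  lie_P_P : ∀ a b, ⁅P a, P b⁆ = 0
  lie_J_H : ⁅J, H⁆ = 0

end Relations

section Swap

variable {ac p : Type*} [LieRing ac] [LieAlgebra ℝ ac] [LieRing p] [LieAlgebra ℝ p]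
  {J H : ac} {B P : Fin 2 → ac} {J' H' : p} {B' P' : Fin 2 → p}

lemma AdSCarrollRelations.map_lie_of_swap (hac : AdSCarrollRelations J H B P)
    (hp : PoincareRelations J' H' B' P')
    (hspan : span ℝ (Set.range ![J, B 0, B 1, H, P 0, P 1]) = ⊤)
    {f : ac →ₗ[ℝ] p} (hJ : f J = J') (hH : f H = H') (hB : ∀ a, f (B a) = P' a)
    (hP : ∀ a, f (P a) = B' a) (x y : ac) : f ⁅x, y⁆ = ⁅f x, f y⁆ := by
  have JB (a) : f ⁅J, B a⁆ = ⁅f J, f (B a)⁆ := by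
    simp [hac.lie_J_B, hp.lie_J_P, hJ, hB]
  have JP (a) : f ⁅J, P a⁆ = ⁅f J, f (P a)⁆ := by
    simp [hac.lie_J_P, hp.lie_J_B, hJ, hP]
  have BP (a b) : f ⁅B a, P b⁆ = ⁅f (B a), f (P b)⁆ := by
    rw [hac.lie_B_P, hB, hP, ← lie_skew, hp.lie_B_P, eps_swap]
    simp [hH]
  have HP (a) : f ⁅H, P a⁆ = ⁅f H, f (P a)⁆ := by
    rw [hac.lie_H_P, hH, hP, ← lie_skew, hp.lie_B_H]
    simp [hB]
  have PP (a b) : f ⁅P a, P b⁆ = ⁅f (P a), f (P b)⁆ := by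
    simp [hac.lie_P_P, hp.lie_B_B, hJ, hP]
  have BB (a b) : f ⁅B a, B b⁆ = ⁅f (B a), f (B b)⁆ := by
    simp [hac.lie_B_B, hp.lie_P_P, hB]
  have BH (a) : f ⁅B a, H⁆ = ⁅f (B a), f H⁆ := by
    rw [hac.lie_B_H, hB, hH, ← lie_skew, hp.lie_H_P]
    simp
  have JH : f ⁅J, H⁆ = ⁅f J, f H⁆ := by
    simp [hac.lie_J_H, hp.lie_J_H, hJ, hH]
  set s : Set ac := {J, H} ∪ Set.range B ∪ Set.range P
  have hs : span ℝ s = ⊤ := by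
    refine eq_top_mono (span_mono ?_) hspan
    rintro _ ⟨i, rfl⟩
    fin_cases i <;> simp [s]
  refine LinearMap.map_lie_of_span_eq_top hs ?_ x y
  rintro x (((rfl | rfl) | ⟨a, rfl⟩) | ⟨a, rfl⟩) y (((rfl | rfl) | ⟨b, rfl⟩) | ⟨b, rfl⟩)
  · simp
  · exact JH
  · exact JB b
  · exact JP b
  · exact LinearMap.map_lie_swap JH
  · simp
  · exact LinearMap.map_lie_swap (BH b)
  · exact HP b
  · exact LinearMap.map_lie_swap (JB a)
  · exact BH a
  · exact BB a b
  · exact BP a b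
  · exact LinearMap.map_lie_swap (JP a)
  · exact LinearMap.map_lie_swap (HP a)
  · exact LinearMap.map_lie_swap (BP b a)
  · exact PP a b

end Swap

/-- The linear map determined by `J ↦ J`, `H ↦ H`, `B_a ↦ P_a`, `P_a ↦ B_a`
is an isomorphism of Lie algebras from the three-dimensional AdS-Carroll algebra onto the
three-dimensional Poincaré algebra. -/
theorem adscarroll_iso_poincare
    (ac : Type*) [LieRing ac] [LieAlgebra ℝ ac]
    (p : Type*) [LieRing p] [LieAlgebra ℝ p]
    (J H : ac) (B P : Fin 2 → ac)
    (J' H' : p) (B' P' : Fin 2 → p)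
    -- AdS-Carroll algebra structure on `ac`
    (hindep : LinearIndependent ℝ ![J, B 0, B 1, H, P 0, P 1])
    (hspan : Submodule.span ℝ (Set.range ![J, B 0, B 1, H, P 0, P 1]) = ⊤)
    (hJB : ∀ a, ⁅J, B a⁆ = ∑ m, eps a m • B m)
    (hJP : ∀ a, ⁅J, P a⁆ = ∑ m, eps a m • P m)
    (hBP : ∀ a b, ⁅B a, P b⁆ = (-(eps a b)) • H)
    (hHP : ∀ a, ⁅H, P a⁆ = ∑ m, eps a m • B m)
    (hPP : ∀ a b, ⁅P a, P b⁆ = (-(eps a b)) • J)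
    (hBB : ∀ a b, ⁅B a, B b⁆ = 0)
    (hBH : ∀ a, ⁅B a, H⁆ = 0)
    (hJH : ⁅J, H⁆ = 0)
    -- Poincaré algebra structure on `p`
    (hindep' : LinearIndependent ℝ ![J', B' 0, B' 1, H', P' 0, P' 1])
    (hspan' : Submodule.span ℝ (Set.range ![J', B' 0, B' 1, H', P' 0, P' 1]) = ⊤)
    (hJB' : ∀ a, ⁅J', B' a⁆ = ∑ m, eps a m • B' m)
    (hJP' : ∀ a, ⁅J', P' a⁆ = ∑ m, eps a m • P' m)
    (hBB' : ∀ a b, ⁅B' a, B' b⁆ = (-(eps a b)) • J')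
    (hBH' : ∀ a, ⁅B' a, H'⁆ = ∑ m, (-(eps a m)) • P' m)
    (hBP' : ∀ a b, ⁅B' a, P' b⁆ = (-(eps a b)) • H')
    (hHP' : ∀ a, ⁅H', P' a⁆ = 0)
    (hPP' : ∀ a b, ⁅P' a, P' b⁆ = 0)
    (hJH' : ⁅J', H'⁆ = 0) :
    ∃ e : ac ≃ₗ⁅ℝ⁆ p,
      e J = J' ∧ e H = H' ∧ (∀ a, e (B a) = P' a) ∧ (∀ a, e (P a) = B' a) := by
  obtain ⟨e, he⟩ :=
    hindep.exists_linearEquiv_apply_eq hspan hindep' hspan' (Equiv.swap 1 4 * Equiv.swap 2 5)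
  have heJ : e J = J' := he 0
  have heH : e H = H' := he 3
  have heB (a) : e (B a) = P' a := by fin_cases a; exacts [he 1, he 2]
  have heP (a) : e (P a) = B' a := by fin_cases a; exacts [he 4, he 5]
  have hac : AdSCarrollRelations J H B P := ⟨hJB, hJP, hBP, hHP, hPP, hBB, hBH, hJH⟩
  have hp : PoincareRelations J' H' B' P' := ⟨hJB', hJP', hBB', hBH', hBP', hHP', hPP', hJH'⟩
  exact ⟨{ e with map_lie' := hac.map_lie_of_swap hp hspan heJ heH heB heP _ _ }, heJ, heH, heB, heP⟩
end

section
/- The six-dimensional real Lie algebra with basis {J, B_1, B_2, H, P_1, P_2} and nonzero brackets [J,B_a] = ε_{am}B_m, [J,P_a] = ε_{am}P_m, [B_a,P_b] = −ε_{ab}H − δ_{ab}J, [H,P_a] = −P_a, [H,B_a] = B_a (the three-dimensional carrollian light cone algebra) is isomorphic as a real Lie algebra to so(3,1), the Lie algebra of real 4×4 matrices X satisfying Xᵀη + ηX = 0 where η = diag(−1,1,1,1). -/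
/-- The Kronecker delta on `Fin 2`. -/
def kron (a b : Fin 2) : ℝ := if a = b then 1 else 0

/-- The 4×4 Minkowski metric `diag(−1,1,1,1)`. -/
noncomputable def eta4 : Matrix (Fin 4) (Fin 4) ℝ := Matrix.diagonal ![-1, 1, 1, 1]

/-!
The isomorphism is explicit. Write `L_μν = E_μν − E_νμ` and `K_μ = E_0μ + E_μ0`, and let the
indices `a, b` label the spatial axes 1, 2. Then `J ↦ −L₁₂`, `H ↦ K₃`, `B_a ↦ K_a + L₃ₐ`,
`P_a ↦ ε_ab (K_b + L_b₃) / 2`; `J`, `H` and the `B_a` span the stabiliser of the null line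
through `(1, 0, 0, 1)`. These six matrices satisfy the defining brackets, so extending linearly
from the given basis yields a Lie algebra morphism, and since they are linearly independent and
span the `η`-skew-adjoint matrices, it is injective onto `so(3,1)`.
-/

attribute [local instance] LieRing.ofAssociativeRing

theorem LinearMap.map_lie_of_span_range_eq_top {R L M ι : Type*} [CommRing R] [LieRing L]
    [LieAlgebra R L] [LieRing M] [LieAlgebra R M] (f : L →ₗ[R] M) {v : ι → L}
    (hv : Submodule.span R (Set.range v) = ⊤) (h : ∀ i j, f ⁅v i, v j⁆ = ⁅f (v i), f (v j)⁆)
    (x y : L) : f ⁅x, y⁆ = ⁅f x, f y⁆ := by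
  have : (LieModule.toEnd R L L : L →ₗ[R] Module.End R L).compr₂ f =
      ((LieModule.toEnd R M M : M →ₗ[R] Module.End R M) ∘ₗ f).compl₂ f :=
    ext_on_range hv fun i ↦ ext_on_range hv fun j ↦ h i j
  simpa using LinearMap.congr_fun₂ this x y

theorem mem_skewAdjointMatricesSubmodule_iff_transpose_mul_add_mul_eq_zero {R n : Type*}
    [CommRing R] [Fintype n] [DecidableEq n] (J X : Matrix n n R) :
    X ∈ skewAdjointMatricesSubmodule J ↔ X.transpose * J + J * X = 0 := by
  rw [mem_skewAdjointMatricesSubmodule, Matrix.IsSkewAdjoint, Matrix.IsAdjointPair, mul_neg,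
    eq_neg_iff_add_eq_zero]

theorem Matrix.transpose_mul_diagonal_add_diagonal_mul_eq_zero_iff {R n : Type*} [CommRing R]
    [Fintype n] [DecidableEq n] (X : Matrix n n R) (d : n → R) :
    X.transpose * Matrix.diagonal d + Matrix.diagonal d * X = 0 ↔
      ∀ i j, X j i * d j + d i * X i j = 0 := by
  simp [← Matrix.ext_iff, Matrix.mul_diagonal, Matrix.diagonal_mul]

section CarrollLightCone

variable {L : Type*} [LieRing L] [LieAlgebra ℝ L]

structure CarrollLightConeRelations (J H : L) (B P : Fin 2 → L) : Prop where
  lie_J_B : ∀ a, ⁅J, B a⁆ = ∑ m, eps a m • B m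
  lie_J_P : ∀ a, ⁅J, P a⁆ = ∑ m, eps a m • P m
  lie_B_P : ∀ a b, ⁅B a, P b⁆ = (-(eps a b)) • H + (-(kron a b)) • J
  lie_H_P : ∀ a, ⁅H, P a⁆ = -(P a)
  lie_H_B : ∀ a, ⁅H, B a⁆ = B a
  lie_J_H : ⁅J, H⁆ = 0
  lie_B_B : ∀ a b, ⁅B a, B b⁆ = 0
  lie_P_P : ∀ a b, ⁅P a, P b⁆ = 0

theorem CarrollLightConeRelations.map_lie {M : Type*} [LieRing M] [LieAlgebra ℝ M]
    {J H : L} {B P : Fin 2 → L} (f : L →ₗ[ℝ] M) (hL : CarrollLightConeRelations J H B P)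
    (hM : CarrollLightConeRelations (f J) (f H) (f ∘ B) (f ∘ P)) (i j : Fin 6) :
    f ⁅![J, B 0, B 1, H, P 0, P 1] i, ![J, B 0, B 1, H, P 0, P 1] j⁆ =
      ⁅f (![J, B 0, B 1, H, P 0, P 1] i), f (![J, B 0, B 1, H, P 0, P 1] j)⁆ := by
  have swap {x y : L} (h : f ⁅x, y⁆ = ⁅f x, f y⁆) : f ⁅y, x⁆ = ⁅f y, f x⁆ := by
    rw [← lie_skew, map_neg, h, lie_skew]
  have diag (x : L) : f ⁅x, x⁆ = ⁅f x, f x⁆ := by rw [lie_self, lie_self, map_zero]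
  have JB (a) : f ⁅J, B a⁆ = ⁅f J, f (B a)⁆ := by
    simpa [hL.lie_J_B, map_sum] using (hM.lie_J_B a).symm
  have JP (a) : f ⁅J, P a⁆ = ⁅f J, f (P a)⁆ := by
    simpa [hL.lie_J_P, map_sum] using (hM.lie_J_P a).symm
  have BP (a b) : f ⁅B a, P b⁆ = ⁅f (B a), f (P b)⁆ := by
    simpa [hL.lie_B_P] using (hM.lie_B_P a b).symm
  have HP (a) : f ⁅H, P a⁆ = ⁅f H, f (P a)⁆ := by
    simpa [hL.lie_H_P] using (hM.lie_H_P a).symm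
  have HB (a) : f ⁅H, B a⁆ = ⁅f H, f (B a)⁆ := by
    simpa [hL.lie_H_B] using (hM.lie_H_B a).symm
  have JH : f ⁅J, H⁆ = ⁅f J, f H⁆ := by rw [hL.lie_J_H, hM.lie_J_H, map_zero]
  have BB (a b) : f ⁅B a, B b⁆ = ⁅f (B a), f (B b)⁆ := by
    simpa [hL.lie_B_B] using (hM.lie_B_B a b).symm
  have PP (a b) : f ⁅P a, P b⁆ = ⁅f (P a), f (P b)⁆ := by
    simpa [hL.lie_P_P] using (hM.lie_P_P a b).symm
  fin_cases i <;> fin_cases j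
  all_goals first
    | exact diag _ | exact JB _ | exact JP _ | exact BP _ _ | exact HP _ | exact HB _
    | exact JH | exact BB _ _ | exact PP _ _
    | exact swap (JB _) | exact swap (JP _) | exact swap (BP _ _) | exact swap (HP _)
    | exact swap (HB _) | exact swap JH

end CarrollLightCone

noncomputable section

def so31J : Matrix (Fin 4) (Fin 4) ℝ := !![0, 0, 0, 0; 0, 0, -1, 0; 0, 1, 0, 0; 0, 0, 0, 0]

def so31H : Matrix (Fin 4) (Fin 4) ℝ := !![0, 0, 0, 1; 0, 0, 0, 0; 0, 0, 0, 0; 1, 0, 0, 0]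

def so31B : Fin 2 → Matrix (Fin 4) (Fin 4) ℝ :=
  ![!![0, 1, 0, 0; 1, 0, 0, -1; 0, 0, 0, 0; 0, 1, 0, 0],
    !![0, 0, 1, 0; 0, 0, 0, 0; 1, 0, 0, -1; 0, 0, 1, 0]]

def so31P : Fin 2 → Matrix (Fin 4) (Fin 4) ℝ :=
  ![!![0, 0, 1/2, 0; 0, 0, 0, 0; 1/2, 0, 0, 1/2; 0, 0, -1/2, 0],
    !![0, -1/2, 0, 0; -1/2, 0, 0, -1/2; 0, 0, 0, 0; 0, 1/2, 0, 0]]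

def so31Frame : Fin 6 → Matrix (Fin 4) (Fin 4) ℝ :=
  ![so31J, so31B 0, so31B 1, so31H, so31P 0, so31P 1]

end

theorem carrollLightConeRelations_so31 :
    CarrollLightConeRelations so31J so31H so31B so31P := by
  constructor <;>
    norm_num [Fin.forall_fin_two, Ring.lie_def, so31J, so31H, so31B, so31P, eps, kron,
      ← Matrix.zero_empty]

theorem mem_so31_iff (X : Matrix (Fin 4) (Fin 4) ℝ) :
    X ∈ skewAdjointMatricesSubmodule eta4 ↔ ∀ i j, X j i * eta4 j j + eta4 i i * X i j = 0 := by
  rw [mem_skewAdjointMatricesSubmodule_iff_transpose_mul_add_mul_eq_zero, eta4,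
    Matrix.transpose_mul_diagonal_add_diagonal_mul_eq_zero_iff]
  simp only [Matrix.diagonal_apply_eq]

theorem so31Frame_mem (i : Fin 6) : so31Frame i ∈ skewAdjointMatricesSubmodule eta4 := by
  rw [mem_so31_iff]
  intro k l
  fin_cases i <;> fin_cases k <;> fin_cases l <;>
    norm_num [so31Frame, so31J, so31H, so31B, so31P, eta4]

theorem linearIndependent_so31Frame : LinearIndependent ℝ so31Frame := by
  rw [Fintype.linearIndependent_iff]
  intro c hc i
  have h12 := congr_fun₂ hc 1 2
  have h03 := congr_fun₂ hc 0 3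
  have h01 := congr_fun₂ hc 0 1
  have h13 := congr_fun₂ hc 1 3
  have h02 := congr_fun₂ hc 0 2
  have h23 := congr_fun₂ hc 2 3
  fin_cases i <;>
    simp [Fin.sum_univ_six, so31Frame, so31J, so31H, so31B, so31P]
      at h12 h03 h01 h13 h02 h23 ⊢ <;>
    linarith

theorem span_so31Frame :
    Submodule.span ℝ (Set.range so31Frame) = skewAdjointMatricesSubmodule eta4 := by
  refine le_antisymm (Submodule.span_le.2 (Set.range_subset_iff.2 so31Frame_mem)) fun X hX => ?_
  rw [mem_so31_iff] at hX
  refine (Submodule.mem_span_range_iff_exists_fun ℝ).mpr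
    ⟨![-X 1 2, (X 0 1 - X 1 3) / 2, (X 0 2 - X 2 3) / 2, X 0 3, X 0 2 + X 2 3, -(X 0 1 + X 1 3)],
      ?_⟩
  ext i j
  have hij := hX i j
  fin_cases i <;> fin_cases j <;>
    simp [Fin.sum_univ_succ, so31Frame, so31J, so31H, so31B, so31P, eta4] at hij ⊢ <;> linarith

/-- The three-dimensional carrollian light cone algebra is isomorphic, as a
real Lie algebra, to `so(3,1)`, the Lie algebra of real 4×4 matrices `X` with
`Xᵀη + ηX = 0`, `η = diag(−1,1,1,1)` (with bracket the matrix commutator). -/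
theorem carrollian_light_cone_iso_so31
    (g : Type*) [LieRing g] [LieAlgebra ℝ g]
    (J H : g) (B P : Fin 2 → g)
    (hindep : LinearIndependent ℝ ![J, B 0, B 1, H, P 0, P 1])
    (hspan : Submodule.span ℝ (Set.range ![J, B 0, B 1, H, P 0, P 1]) = ⊤)
    (hJB : ∀ a, ⁅J, B a⁆ = ∑ m, eps a m • B m)
    (hJP : ∀ a, ⁅J, P a⁆ = ∑ m, eps a m • P m)
    (hBP : ∀ a b, ⁅B a, P b⁆ = (-(eps a b)) • H + (-(kron a b)) • J)
    (hHP : ∀ a, ⁅H, P a⁆ = -(P a))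
    (hHB : ∀ a, ⁅H, B a⁆ = B a)
    (hJH : ⁅J, H⁆ = 0)
    (hBB : ∀ a b, ⁅B a, B b⁆ = 0)
    (hPP : ∀ a b, ⁅P a, P b⁆ = 0) :
    ∃ e : g →ₗ[ℝ] Matrix (Fin 4) (Fin 4) ℝ,
      Function.Injective e ∧
      (∀ x y : g, e ⁅x, y⁆ = e x * e y - e y * e x) ∧
      Set.range e = {X : Matrix (Fin 4) (Fin 4) ℝ | X.transpose * eta4 + eta4 * X = 0} := by
  let b := Module.Basis.mk hindep hspan.ge
  let e := b.constr ℝ so31Frame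
  have he (i : Fin 6) : e (![J, B 0, B 1, H, P 0, P 1] i) = so31Frame i := by
    rw [← Module.Basis.mk_apply hindep hspan.ge, b.constr_basis]
  have hL : CarrollLightConeRelations J H B P := ⟨hJB, hJP, hBP, hHP, hHB, hJH, hBB, hPP⟩
  have hM : CarrollLightConeRelations (e J) (e H) (e ∘ B) (e ∘ P) := by
    have hB : e ∘ B = so31B := funext (Fin.forall_fin_two.2 ⟨he 1, he 2⟩)
    have hP : e ∘ P = so31P := funext (Fin.forall_fin_two.2 ⟨he 4, he 5⟩)
    rw [show e J = so31J from he 0, show e H = so31H from he 3, hB, hP]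
    exact carrollLightConeRelations_so31
  refine ⟨e, b.injective_constr_of_linearIndependent linearIndependent_so31Frame,
    fun x y ↦ ?_, ?_⟩
  · rw [← Ring.lie_def]
    exact e.map_lie_of_span_range_eq_top hspan (hL.map_lie e hM) x y
  · ext X
    rw [← LinearMap.coe_range, b.constr_range, span_so31Frame, SetLike.mem_coe,
      mem_skewAdjointMatricesSubmodule_iff_transpose_mul_add_mul_eq_zero,
      Set.mem_ofPred_eq]
end

section
/- Fix real numbers γ and χ, and let g be the six-dimensional real Lie algebra with basis {J, B_1, B_2, H, P_1, P_2} and nonzero brackets [J,B_a] = ε_{am}B_m, [J,P_a] = ε_{am}P_m, [H,B_a] = ε_{am}P_m, [H,P_a] = (1+γ)P_a − χε_{am}P_m + γε_{am}B_m + χB_a (the family of torsional galilean algebras, containing torsional galilean de Sitter for χ = 0 and torsional galilean anti-de Sitter for γ such that 1+γ² replaces the parameters accordingly). Then every invariant symmetric bilinear form B on g satisfies B(x,y) = 0 whenever x lies in the span of {B_1, B_2, P_1, P_2}; hence the space of invariant symmetric bilinear forms on g is exactly the three-parameter family determined by the values B(J,J), B(J,H), B(H,H), and none of these forms is nondegenerate.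 -/
/-!
Put `S = span {B₁, B₂, P₁, P₂}`. It is abelian, `ad J` maps it onto itself (a rotation in the
`B`- and `P`-planes), and `g = span {J, H} + S` with `[J, H] = 0`. Writing `s ∈ S` as `[J, t]`
with `t ∈ S`, invariance gives `Φ(s, y) = -Φ(t, [J, y]) = 0` for `y ∈ {J, H}` and
`Φ(s, y) = Φ(J, [t, y]) = 0` for `y ∈ S`. So `S` lies in the radical of every invariant form,
which is therefore determined by its values on `J` and `H`. Conversely `S` is an ideal, so
`[g, g] ⊆ S`: the coordinate functionals dual to `J` and `H` kill all brackets, and their products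
span the three-parameter family.
-/

open Submodule LieAlgebra LinearMap.BilinForm

section SpanPairSup

variable {R L M : Type*} [CommRing R] [AddCommGroup L] [Module R L] [AddCommGroup M] [Module R M]
  {u v : L} {S : Submodule R L}

theorem map_mem_of_span_pair_sup_eq_top (htop : span R {u, v} ⊔ S = ⊤) (f : L →ₗ[R] M)
    {T : Submodule R M} (hu : f u ∈ T) (hv : f v ∈ T) (hS : ∀ s ∈ S, f s ∈ T) (x : L) :
    f x ∈ T := by
  have hle : span R {u, v} ⊔ S ≤ T.comap f :=
    sup_le (span_le.2 (Set.insert_subset_iff.2 ⟨hu, Set.singleton_subset_iff.2 hv⟩)) hS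
  exact hle (htop ▸ mem_top)

theorem eq_zero_of_span_pair_sup_eq_top (htop : span R {u, v} ⊔ S = ⊤) {f : L →ₗ[R] M}
    (hu : f u = 0) (hv : f v = 0) (hS : ∀ s ∈ S, f s = 0) : f = 0 :=
  LinearMap.ext fun x => (mem_bot R).1 <|
    map_mem_of_span_pair_sup_eq_top htop f ((mem_bot R).2 hu) ((mem_bot R).2 hv)
      (fun s hs => (mem_bot R).2 (hS s hs)) x

end SpanPairSup

section LieAlgebra

variable {R L : Type*} [CommRing R] [LieRing L] [LieAlgebra R L] {u v : L} {S : Submodule R L}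

theorem lie_mem_of_span_pair_sup_eq_top (htop : span R {u, v} ⊔ S = ⊤) (huv : ⁅u, v⁆ ∈ S)
    (hu : ∀ s ∈ S, ⁅u, s⁆ ∈ S) (hv : ∀ s ∈ S, ⁅v, s⁆ ∈ S) (hS : ∀ s ∈ S, ∀ t ∈ S, ⁅s, t⁆ ∈ S)
    (x y : L) : ⁅x, y⁆ ∈ S := by
  have skew {a b : L} (h : ⁅a, b⁆ ∈ S) : ⁅b, a⁆ ∈ S := by rw [← lie_skew]; exact neg_mem h
  have lie_u : ∀ y, ⁅u, y⁆ ∈ S :=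
    map_mem_of_span_pair_sup_eq_top htop (ad R L u) (by simp) huv hu
  have lie_v : ∀ y, ⁅v, y⁆ ∈ S :=
    map_mem_of_span_pair_sup_eq_top htop (ad R L v) (skew huv) (by simp) hv
  have lie_S : ∀ s ∈ S, ∀ y, ⁅s, y⁆ ∈ S := fun s hs =>
    map_mem_of_span_pair_sup_eq_top htop (ad R L s) (skew (hu s hs)) (skew (hv s hs)) (hS s hs)
  exact skew <| map_mem_of_span_pair_sup_eq_top htop (ad R L y) (skew (lie_u y)) (skew (lie_v y))
    (fun s hs => skew (lie_S s hs y)) x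

theorem lie_eq_zero_of_mem_span {s : Set L} (hs : ∀ a ∈ s, ∀ b ∈ s, ⁅a, b⁆ = 0) {x y : L}
    (hx : x ∈ span R s) (hy : y ∈ span R s) : ⁅x, y⁆ = 0 := by
  have hgen : ∀ a ∈ s, span R s ≤ LinearMap.ker (ad R L a) := fun a ha =>
    span_le.2 fun b hb => hs a ha b hb
  have hle : span R s ≤ LinearMap.ker (ad R L y) := span_le.2 fun a ha => by
    rw [SetLike.mem_coe, LinearMap.mem_ker, ad_apply, ← lie_skew, neg_eq_zero]
    exact hgen a ha hy
  rw [← lie_skew, neg_eq_zero]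
  exact hle hx

theorem LinearMap.BilinForm.lieInvariant.apply_eq_zero_of_le_map_ad {Φ : LinearMap.BilinForm R L}
    (hΦ : Φ.lieInvariant L) {z w : L} (htop : span R {z, w} ⊔ S = ⊤) (hzw : ⁅z, w⁆ = 0)
    (hS : ∀ s ∈ S, ∀ t ∈ S, ⁅s, t⁆ = 0) (hz : S ≤ S.map (ad R L z)) {s : L} (hs : s ∈ S) :
    Φ s = 0 := by
  obtain ⟨t, ht, rfl⟩ := hz hs
  refine eq_zero_of_span_pair_sup_eq_top htop ?_ ?_ fun y hy => ?_
  · rw [ad_apply, hΦ, lie_self, map_zero, neg_zero]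
  · rw [ad_apply, hΦ, hzw, map_zero, neg_zero]
  · rw [ad_apply, ← lie_skew, map_neg, LinearMap.neg_apply, hΦ, hS t ht y hy, map_zero,
      neg_zero, neg_zero]

end LieAlgebra

structure IsTorsionalGalilean {R L : Type*} [CommRing R] [LieRing L] [LieAlgebra R L]
    (γ χ : R) (J H : L) (B P : Fin 2 → L) : Prop where
  lie_J_B0 : ⁅J, B 0⁆ = B 1
  lie_J_B1 : ⁅J, B 1⁆ = -B 0
  lie_J_P0 : ⁅J, P 0⁆ = P 1
  lie_J_P1 : ⁅J, P 1⁆ = -P 0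
  lie_H_B0 : ⁅H, B 0⁆ = P 1
  lie_H_B1 : ⁅H, B 1⁆ = -P 0
  lie_H_P0 : ⁅H, P 0⁆ = (1 + γ) • P 0 - χ • P 1 + γ • B 1 + χ • B 0
  lie_H_P1 : ⁅H, P 1⁆ = (1 + γ) • P 1 + χ • P 0 - γ • B 0 + χ • B 1
  lie_J_H : ⁅J, H⁆ = 0
  lie_B_B : ∀ a b, ⁅B a, B b⁆ = 0
  lie_B_P : ∀ a b, ⁅B a, P b⁆ = 0
  lie_P_P : ∀ a b, ⁅P a, P b⁆ = 0

namespace IsTorsionalGalilean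

theorem of_eps {g : Type*} [LieRing g] [LieAlgebra ℝ g] {γ χ : ℝ} {J H : g} {B P : Fin 2 → g}
    (hJB : ∀ a, ⁅J, B a⁆ = ∑ m, eps a m • B m)
    (hJP : ∀ a, ⁅J, P a⁆ = ∑ m, eps a m • P m)
    (hHB : ∀ a, ⁅H, B a⁆ = ∑ m, eps a m • P m)
    (hHP : ∀ a, ⁅H, P a⁆ =
      (1 + γ) • P a + (∑ m, (-(χ * eps a m)) • P m) + (∑ m, (γ * eps a m) • B m) + χ • B a)
    (hJH : ⁅J, H⁆ = 0) (hBB : ∀ a b, ⁅B a, B b⁆ = 0) (hBP : ∀ a b, ⁅B a, P b⁆ = 0)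
    (hPP : ∀ a b, ⁅P a, P b⁆ = 0) : IsTorsionalGalilean γ χ J H B P where
  lie_J_B0 := by simp [hJB, Fin.sum_univ_two, eps]
  lie_J_B1 := by simp [hJB, Fin.sum_univ_two, eps]
  lie_J_P0 := by simp [hJP, Fin.sum_univ_two, eps]
  lie_J_P1 := by simp [hJP, Fin.sum_univ_two, eps]
  lie_H_B0 := by simp [hHB, Fin.sum_univ_two, eps]
  lie_H_B1 := by simp [hHB, Fin.sum_univ_two, eps]
  lie_H_P0 := by simp [hHP, Fin.sum_univ_two, eps]; module
  lie_H_P1 := by simp [hHP, Fin.sum_univ_two, eps]; module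
  lie_J_H := hJH
  lie_B_B := hBB
  lie_B_P := hBP
  lie_P_P := hPP

variable {R L : Type*} [CommRing R] [LieRing L] [LieAlgebra R L] {γ χ : R} {J H : L}
  {B P : Fin 2 → L}

theorem span_pair_sup_eq_top (hspan : span R (Set.range ![J, B 0, B 1, H, P 0, P 1]) = ⊤) :
    span R {J, H} ⊔ span R {B 0, B 1, P 0, P 1} = ⊤ := by
  rw [← span_union]
  refine eq_top_iff.2 (hspan ▸ span_mono (Set.range_subset_iff.2 fun i => ?_))
  fin_cases i <;> simp

theorem lie_eq_zero_of_mem (h : IsTorsionalGalilean γ χ J H B P) {s t : L}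
    (hs : s ∈ span R {B 0, B 1, P 0, P 1}) (ht : t ∈ span R {B 0, B 1, P 0, P 1}) : ⁅s, t⁆ = 0 := by
  have lie_P_B (a b) : ⁅P a, B b⁆ = 0 := by rw [← lie_skew, h.lie_B_P, neg_zero]
  refine lie_eq_zero_of_mem_span ?_ hs ht
  simp [h.lie_B_B, h.lie_B_P, h.lie_P_P, lie_P_B]

theorem le_map_ad (h : IsTorsionalGalilean γ χ J H B P) :
    span R {B 0, B 1, P 0, P 1} ≤ (span R {B 0, B 1, P 0, P 1}).map (ad R L J) := by
  have hB (a : Fin 2) : B a ∈ span R {B 0, B 1, P 0, P 1} := subset_span (by fin_cases a <;> simp)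
  have hP (a : Fin 2) : P a ∈ span R {B 0, B 1, P 0, P 1} := subset_span (by fin_cases a <;> simp)
  simp only [span_le, Set.insert_subset_iff, Set.singleton_subset_iff, SetLike.mem_coe, mem_map,
    ad_apply]
  exact ⟨⟨-B 1, neg_mem (hB 1), by simp [h.lie_J_B1]⟩, ⟨B 0, hB 0, h.lie_J_B0⟩,
    ⟨-P 1, neg_mem (hP 1), by simp [h.lie_J_P1]⟩, ⟨P 0, hP 0, h.lie_J_P0⟩⟩

theorem lie_mem (h : IsTorsionalGalilean γ χ J H B P)
    (htop : span R {J, H} ⊔ span R {B 0, B 1, P 0, P 1} = ⊤) (x y : L) :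
    ⁅x, y⁆ ∈ span R {B 0, B 1, P 0, P 1} := by
  set S := span R {B 0, B 1, P 0, P 1}
  have hB (a : Fin 2) : B a ∈ S := subset_span (by fin_cases a <;> simp)
  have hP (a : Fin 2) : P a ∈ S := subset_span (by fin_cases a <;> simp)
  have preserves {z : L} (h0 : ⁅z, B 0⁆ ∈ S) (h1 : ⁅z, B 1⁆ ∈ S) (h2 : ⁅z, P 0⁆ ∈ S)
      (h3 : ⁅z, P 1⁆ ∈ S) (s : L) (hs : s ∈ S) : ⁅z, s⁆ ∈ S :=
    (span_le (p := S.comap (ad R L z))).2 (by simp [Set.insert_subset_iff, h0, h1, h2, h3]) hs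
  refine lie_mem_of_span_pair_sup_eq_top htop (by simp [h.lie_J_H])
    (preserves ?_ ?_ ?_ ?_) (preserves ?_ ?_ ?_ ?_)
    (fun s hs t ht => by simp [h.lie_eq_zero_of_mem hs ht]) x y <;>
  simp only [h.lie_J_B0, h.lie_J_B1, h.lie_J_P0, h.lie_J_P1, h.lie_H_B0, h.lie_H_B1,
    h.lie_H_P0, h.lie_H_P1] <;>
  apply_rules [add_mem, sub_mem, neg_mem, Submodule.smul_mem, hB, hP]

theorem apply_eq_zero_of_lieInvariant (h : IsTorsionalGalilean γ χ J H B P)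
    (htop : span R {J, H} ⊔ span R {B 0, B 1, P 0, P 1} = ⊤) {Φ : LinearMap.BilinForm R L}
    (hΦ : Φ.lieInvariant L) {s : L} (hs : s ∈ span R {B 0, B 1, P 0, P 1}) : Φ s = 0 :=
  hΦ.apply_eq_zero_of_le_map_ad htop h.lie_J_H (fun _ hs _ ht => h.lie_eq_zero_of_mem hs ht)
    h.le_map_ad hs

theorem eq_zero_of_lieInvariant (h : IsTorsionalGalilean γ χ J H B P)
    (htop : span R {J, H} ⊔ span R {B 0, B 1, P 0, P 1} = ⊤) {Φ : LinearMap.BilinForm R L}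
    (hΦ : Φ.lieInvariant L) (hsymm : ∀ x y, Φ x y = Φ y x) (hJJ : Φ J J = 0) (hJH : Φ J H = 0)
    (hHH : Φ H H = 0) : Φ = 0 := by
  have hS (s) (hs : s ∈ span R {B 0, B 1, P 0, P 1}) : Φ s = 0 :=
    h.apply_eq_zero_of_lieInvariant htop hΦ hs
  refine eq_zero_of_span_pair_sup_eq_top htop ?_ ?_ hS
  · exact eq_zero_of_span_pair_sup_eq_top htop hJJ hJH fun s hs => by rw [hsymm, hS s hs]; rfl
  · exact eq_zero_of_span_pair_sup_eq_top htop (by rw [hsymm, hJH]) hHH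
      fun s hs => by rw [hsymm, hS s hs]; rfl

theorem exists_lieInvariant (h : IsTorsionalGalilean γ χ J H B P)
    (hindep : LinearIndependent R ![J, B 0, B 1, H, P 0, P 1])
    (hspan : span R (Set.range ![J, B 0, B 1, H, P 0, P 1]) = ⊤) (cJJ cJH cHH : R) :
    ∃ Φ : LinearMap.BilinForm R L, Φ.lieInvariant L ∧ (∀ x y, Φ x y = Φ y x) ∧
      Φ J J = cJJ ∧ Φ J H = cJH ∧ Φ H H = cHH := by
  let b := Module.Basis.mk hindep hspan.ge
  have hb : b 0 = J ∧ b 1 = B 0 ∧ b 2 = B 1 ∧ b 3 = H ∧ b 4 = P 0 ∧ b 5 = P 1 := by simp [b]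
  obtain ⟨hb0, hb1, hb2, hb3, hb4, hb5⟩ := hb
  have kills (i : Fin 6) (hi : i = 0 ∨ i = 3) (x y : L) : b.coord i ⁅x, y⁆ = 0 := by
    refine (span_le (p := LinearMap.ker (b.coord i))).2 ?_
      (h.lie_mem (span_pair_sup_eq_top hspan) x y)
    rw [← hb1, ← hb2, ← hb4, ← hb5]
    rcases hi with rfl | rfl <;> simp [Set.insert_subset_iff]
  refine ⟨cJJ • linMulLin (b.coord 0) (b.coord 0) +
    cJH • (linMulLin (b.coord 0) (b.coord 3) + linMulLin (b.coord 3) (b.coord 0)) +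
    cHH • linMulLin (b.coord 3) (b.coord 3), fun x y z => ?_, fun x y => ?_, ?_⟩
  · simp [linMulLin_apply, kills]
  · simp only [LinearMap.add_apply, LinearMap.smul_apply, linMulLin_apply]
    ring
  · rw [← hb0, ← hb3]
    simp [linMulLin_apply]

end IsTorsionalGalilean

/-- For the torsional galilean algebras in 2+1 dimensions (parameters
`γ, χ`), every invariant symmetric bilinear form vanishes against the span of
`{B_1, B_2, P_1, P_2}`; hence the invariant symmetric bilinear forms are exactly the
three-parameter family determined by the values on `(J,J)`, `(J,H)`, `(H,H)`, and none of
them is nondegenerate. -/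
theorem torsional_galilean_no_invariant_metric
    (γ χ : ℝ)
    (g : Type*) [LieRing g] [LieAlgebra ℝ g]
    (J H : g) (B P : Fin 2 → g)
    (hindep : LinearIndependent ℝ ![J, B 0, B 1, H, P 0, P 1])
    (hspan : Submodule.span ℝ (Set.range ![J, B 0, B 1, H, P 0, P 1]) = ⊤)
    (hJB : ∀ a, ⁅J, B a⁆ = ∑ m, eps a m • B m)
    (hJP : ∀ a, ⁅J, P a⁆ = ∑ m, eps a m • P m)
    (hHB : ∀ a, ⁅H, B a⁆ = ∑ m, eps a m • P m)
    (hHP : ∀ a, ⁅H, P a⁆ =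
      (1 + γ) • P a + (∑ m, (-(χ * eps a m)) • P m) + (∑ m, (γ * eps a m) • B m) + χ • B a)
    (hJH : ⁅J, H⁆ = 0)
    (hBB : ∀ a b, ⁅B a, B b⁆ = 0)
    (hBP : ∀ a b, ⁅B a, P b⁆ = 0)
    (hPP : ∀ a b, ⁅P a, P b⁆ = 0) :
    -- every invariant symmetric bilinear form vanishes against span {B_1,B_2,P_1,P_2}
    (∀ Bil : g →ₗ[ℝ] g →ₗ[ℝ] ℝ,
        (∀ x y : g, Bil x y = Bil y x) →
        (∀ x y z : g, Bil ⁅z, x⁆ y + Bil x ⁅z, y⁆ = 0) →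
        ∀ x ∈ Submodule.span ℝ ({B 0, B 1, P 0, P 1} : Set g), ∀ y : g, Bil x y = 0) ∧
    -- the three-parameter family: existence …
    (∀ cJJ cJH cHH : ℝ, ∃ Bil : g →ₗ[ℝ] g →ₗ[ℝ] ℝ,
        (∀ x y : g, Bil x y = Bil y x) ∧
        (∀ x y z : g, Bil ⁅z, x⁆ y + Bil x ⁅z, y⁆ = 0) ∧
        Bil J J = cJJ ∧ Bil J H = cJH ∧ Bil H H = cHH) ∧
    -- … and uniqueness given the values on (J,J), (J,H), (H,H)
    (∀ Bil Bil' : g →ₗ[ℝ] g →ₗ[ℝ] ℝ,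
        (∀ x y : g, Bil x y = Bil y x) →
        (∀ x y z : g, Bil ⁅z, x⁆ y + Bil x ⁅z, y⁆ = 0) →
        (∀ x y : g, Bil' x y = Bil' y x) →
        (∀ x y z : g, Bil' ⁅z, x⁆ y + Bil' x ⁅z, y⁆ = 0) →
        Bil J J = Bil' J J → Bil J H = Bil' J H → Bil H H = Bil' H H → Bil = Bil') ∧
    -- no invariant symmetric bilinear form is nondegenerate
    (∀ Bil : g →ₗ[ℝ] g →ₗ[ℝ] ℝ,
        (∀ x y : g, Bil x y = Bil y x) →
        (∀ x y z : g, Bil ⁅z, x⁆ y + Bil x ⁅z, y⁆ = 0) →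
        ¬ (∀ x : g, (∀ y : g, Bil x y = 0) → x = 0)) := by
  have h := IsTorsionalGalilean.of_eps hJB hJP hHB hHP hJH hBB hBP hPP
  have htop := IsTorsionalGalilean.span_pair_sup_eq_top hspan
  have invariant {Φ : LinearMap.BilinForm ℝ g} (hΦ : ∀ x y z, Φ ⁅z, x⁆ y + Φ x ⁅z, y⁆ = 0) :
      Φ.lieInvariant g := fun x y z => eq_neg_of_add_eq_zero_left (hΦ y z x)
  refine ⟨fun Φ _ hΦ x hx y => ?_, fun cJJ cJH cHH => ?_, fun Φ Φ' hs hΦ hs' hΦ' hJJ hJH hHH => ?_,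
    fun Φ _ hΦ hnd => ?_⟩
  · rw [h.apply_eq_zero_of_lieInvariant htop (invariant hΦ) hx, LinearMap.zero_apply]
  · obtain ⟨Φ, hΦ, hs, hJJ, hJH, hHH⟩ := h.exists_lieInvariant hindep hspan cJJ cJH cHH
    exact ⟨Φ, hs, fun x y z => add_eq_zero_iff_eq_neg.2 (hΦ z x y), hJJ, hJH, hHH⟩
  · refine sub_eq_zero.1 (h.eq_zero_of_lieInvariant htop (invariant fun x y z => ?_) (fun x y => ?_)
      (sub_eq_zero.2 hJJ) (sub_eq_zero.2 hJH) (sub_eq_zero.2 hHH))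
    · simp only [LinearMap.sub_apply]
      linear_combination hΦ x y z - hΦ' x y z
    · simp only [LinearMap.sub_apply, hs x y, hs' x y]
  · have B0_mem : B 0 ∈ span ℝ {B 0, B 1, P 0, P 1} := subset_span (by simp)
    refine hindep.ne_zero 1 (hnd (B 0) fun y => ?_)
    rw [h.apply_eq_zero_of_lieInvariant htop (invariant hΦ) B0_mem, LinearMap.zero_apply]
end

section
/- Let g be the five-dimensional real Lie algebra with basis {J, H, P_1, P_2, Z} and nonzero brackets [J,P_a] = ε_{am}P_m and [P_a,P_b] = ε_{ab}Z, with H and Z central (the aristotelian static algebra in 2+1 dimensions with the central extension Z). Then: (i) for all real χ_J, χ_{JH}, χ_H, χ_P the symmetric bilinear form determined by B(J,J) = χ_J, B(J,H) = χ_{JH}, B(H,H) = χ_H, B(P_a,P_b) = χ_Pδ_{ab}, B(J,Z) = χ_P, with all other basis pairings zero, is invariant; (ii) every invariant symmetric bilinear form on g is of this type; and (iii) such a form is nondegenerate if and only if χ_P ≠ 0 and χ_H ≠ 0. -/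
/-- The Gram matrix of the forms of the theorem in the basis `(J, H, P 0, P 1, Z)`. -/
def aristotelianGram (χJ χJH χH χP : ℝ) : Matrix (Fin 5) (Fin 5) ℝ :=
  !![χJ, χJH, 0, 0, χP; χJH, χH, 0, 0, 0; 0, 0, χP, 0, 0; 0, 0, 0, χP, 0; χP, 0, 0, 0, 0]

lemma det_aristotelianGram (χJ χJH χH χP : ℝ) :
    (aristotelianGram χJ χJH χH χP).det = -(χH * χP ^ 4) := by
  simp [aristotelianGram, Matrix.det_succ_row_zero, Fin.sum_univ_succ, Fin.succAbove]
  ring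

section Module

variable {M : Type*} [AddCommGroup M] [Module ℝ M]

def IsAristotelianForm (J H Z : M) (P : Fin 2 → M) (B : M →ₗ[ℝ] M →ₗ[ℝ] ℝ)
    (χJ χJH χH χP : ℝ) : Prop :=
  B J J = χJ ∧ B J H = χJH ∧ B H H = χH ∧
    (∀ a b, B (P a) (P b) = χP * kron a b) ∧ B J Z = χP ∧
    (∀ a, B J (P a) = 0) ∧ (∀ a, B H (P a) = 0) ∧ B H Z = 0 ∧
    (∀ a, B (P a) Z = 0) ∧ B Z Z = 0

lemma toLinearMap₂_aristotelianGram_apply (b : Module.Basis (Fin 5) ℝ M)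
    (χJ χJH χH χP : ℝ) (x y : M) :
    Matrix.toLinearMap₂ b b (aristotelianGram χJ χJH χH χP) x y =
      χJ * b.repr x 0 * b.repr y 0 + χJH * (b.repr x 0 * b.repr y 1 + b.repr x 1 * b.repr y 0) +
        χH * b.repr x 1 * b.repr y 1 + χP * (b.repr x 2 * b.repr y 2 +
          b.repr x 3 * b.repr y 3 + b.repr x 0 * b.repr y 4 + b.repr x 4 * b.repr y 0) := by
  simp only [aristotelianGram, Matrix.toLinearMap₂_apply, Matrix.of_apply, Matrix.cons_val',
    Matrix.cons_val_fin_one, smul_eq_mul, Fin.sum_univ_five, Fin.isValue, Matrix.cons_val_zero,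
    Matrix.cons_val_one, Matrix.cons_val, mul_zero, add_zero, zero_add]
  ring

lemma toLinearMap₂_aristotelianGram_symm (b : Module.Basis (Fin 5) ℝ M)
    (χJ χJH χH χP : ℝ) (x y : M) :
    Matrix.toLinearMap₂ b b (aristotelianGram χJ χJH χH χP) x y =
      Matrix.toLinearMap₂ b b (aristotelianGram χJ χJH χH χP) y x := by
  simp only [toLinearMap₂_aristotelianGram_apply]
  ring

lemma toMatrix₂_eq_aristotelianGram_iff {J H Z : M} {P : Fin 2 → M}
    {B : M →ₗ[ℝ] M →ₗ[ℝ] ℝ} {χJ χJH χH χP : ℝ} (b : Module.Basis (Fin 5) ℝ M)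
    (hb : ⇑b = ![J, H, P 0, P 1, Z]) (hsym : ∀ x y, B x y = B y x) :
    LinearMap.toMatrix₂ b b B = aristotelianGram χJ χJH χH χP ↔
      IsAristotelianForm J H Z P B χJ χJH χH χP := by
  constructor
  · intro hB
    have e : ∀ i j, B (b i) (b j) = aristotelianGram χJ χJH χH χP i j := fun i j => by
      rw [← hB, LinearMap.toMatrix₂_apply]
    simp only [hb, aristotelianGram] at e
    refine ⟨by simpa using e 0 0, by simpa using e 0 1, by simpa using e 1 1, fun a c => ?_,
      by simpa using e 0 4, fun a => ?_, fun a => ?_, by simpa using e 1 4, fun a => ?_,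
      by simpa using e 4 4⟩
    · fin_cases a <;> fin_cases c
      · simpa [kron] using e 2 2
      · simpa [kron] using e 2 3
      · simpa [kron] using e 3 2
      · simpa [kron] using e 3 3
    · fin_cases a
      · simpa using e 0 2
      · simpa using e 0 3
    · fin_cases a
      · simpa using e 1 2
      · simpa using e 1 3
    · fin_cases a
      · simpa using e 2 4
      · simpa using e 3 4
  · rintro ⟨hJJ, hJH, hHH, hPP, hJZ, hJP, hHP, hHZ, hPZ, hZZ⟩
    ext i j
    fin_cases i <;> fin_cases j <;>
      simp [hb, aristotelianGram, kron, hJJ, hJH, hHH, hPP, hJZ, hJP, hHP, hHZ, hPZ, hZZ,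
        hsym _ J, hsym _ H, hsym Z]

end Module

section LieAlgebra

variable {g : Type*} [LieRing g] [LieAlgebra ℝ g]

structure AristotelianBrackets (J H Z : g) (P : Fin 2 → g) : Prop where
  lie_J_P : ∀ a, ⁅J, P a⁆ = ∑ m, eps a m • P m
  lie_P_P : ∀ a b, ⁅P a, P b⁆ = eps a b • Z
  lie_H : ∀ x : g, ⁅H, x⁆ = 0
  lie_Z : ∀ x : g, ⁅Z, x⁆ = 0

namespace AristotelianBrackets

variable {J H Z : g} {P : Fin 2 → g} (h : AristotelianBrackets J H Z P)
include h

lemma lie_J_P_zero : ⁅J, P 0⁆ = P 1 := by simp [h.lie_J_P, eps]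

lemma lie_J_P_one : ⁅J, P 1⁆ = -P 0 := by simp [h.lie_J_P, eps]

lemma lie_P_zero_P_one : ⁅P 0, P 1⁆ = Z := by simp [h.lie_P_P, eps]

lemma lie_H_right (x : g) : ⁅x, H⁆ = 0 := by rw [← lie_skew, h.lie_H, neg_zero]

lemma lie_Z_right (x : g) : ⁅x, Z⁆ = 0 := by rw [← lie_skew, h.lie_Z, neg_zero]

lemma lie_eq_repr (b : Module.Basis (Fin 5) ℝ g) (hb : ⇑b = ![J, H, P 0, P 1, Z]) (x y : g) :
    ⁅x, y⁆ = (b.repr x 3 * b.repr y 0 - b.repr x 0 * b.repr y 3) • P 0 +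
      (b.repr x 0 * b.repr y 2 - b.repr x 2 * b.repr y 0) • P 1 +
      (b.repr x 2 * b.repr y 3 - b.repr x 3 * b.repr y 2) • Z := by
  conv_lhs => rw [← b.sum_repr x, ← b.sum_repr y]
  simp [Fin.sum_univ_five, hb, h.lie_H, h.lie_Z, h.lie_H_right, h.lie_Z_right,
    ← lie_skew (P _) J, h.lie_J_P_zero, h.lie_J_P_one, h.lie_P_P, eps]
  module

lemma toLinearMap₂_aristotelianGram_invariant (b : Module.Basis (Fin 5) ℝ g)
    (hb : ⇑b = ![J, H, P 0, P 1, Z]) (χJ χJH χH χP : ℝ) (x y z : g) :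
    Matrix.toLinearMap₂ b b (aristotelianGram χJ χJH χH χP) ⁅z, x⁆ y +
      Matrix.toLinearMap₂ b b (aristotelianGram χJ χJH χH χP) x ⁅z, y⁆ = 0 := by
  have hP0 : P 0 = b 2 := by simp [hb]
  have hP1 : P 1 = b 3 := by simp [hb]
  have hZ : Z = b 4 := by simp [hb]
  rw [toLinearMap₂_aristotelianGram_apply, toLinearMap₂_aristotelianGram_apply,
    h.lie_eq_repr b hb, h.lie_eq_repr b hb, hP0, hP1, hZ]
  simp only [map_add, map_smul, Module.Basis.repr_self, Finsupp.smul_single, smul_eq_mul,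
    mul_one, Finsupp.coe_add, Pi.add_apply, ne_eq, Fin.reduceEq, not_false_eq_true,
    Finsupp.single_eq_of_ne, Finsupp.single_eq_same, add_zero, zero_add]
  ring

lemma isAristotelianForm_of_invariant {B : g →ₗ[ℝ] g →ₗ[ℝ] ℝ}
    (hsym : ∀ x y, B x y = B y x) (hinv : ∀ x y z : g, B ⁅z, x⁆ y + B x ⁅z, y⁆ = 0) :
    IsAristotelianForm J H Z P B (B J J) (B J H) (B H H) (B (P 0) (P 0)) := by
  have hP01 : B (P 0) (P 1) = 0 := by
    have := hinv (P 0) (P 0) J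
    rw [h.lie_J_P_zero, hsym (P 1)] at this
    linarith
  have hP11 : B (P 1) (P 1) = B (P 0) (P 0) := by
    simpa [h.lie_J_P_zero, h.lie_J_P_one, add_neg_eq_zero] using hinv (P 0) (P 1) J
  have hJZ : B J Z = B (P 0) (P 0) := by
    have := hinv J (P 1) (P 0)
    rw [← lie_skew, h.lie_J_P_zero, h.lie_P_zero_P_one, map_neg, LinearMap.neg_apply] at this
    linarith
  have hJP0 : B J (P 0) = 0 := by simpa [h.lie_J_P_one] using hinv J (P 1) J
  have hJP1 : B J (P 1) = 0 := by simpa [h.lie_J_P_zero] using hinv J (P 0) J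
  have hHP0 : B H (P 0) = 0 := by
    simpa [h.lie_J_P_one, h.lie_H_right] using hinv H (P 1) J
  have hHP1 : B H (P 1) = 0 := by
    simpa [h.lie_J_P_zero, h.lie_H_right] using hinv H (P 0) J
  have hHZ : B H Z = 0 := by
    simpa [h.lie_P_zero_P_one, h.lie_H_right] using hinv H (P 1) (P 0)
  have hP0Z : B (P 0) Z = 0 := by
    have := hinv (P 0) (P 0) (P 1)
    rw [← lie_skew, h.lie_P_zero_P_one, map_neg, map_neg, LinearMap.neg_apply, hsym Z] at this
    linarith
  have hP1Z : B (P 1) Z = 0 := by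
    have := hinv (P 1) (P 1) (P 0)
    rw [h.lie_P_zero_P_one, hsym Z] at this
    linarith
  have hZZ : B Z Z = 0 := by
    simpa [h.lie_P_zero_P_one, h.lie_Z_right] using hinv Z (P 1) (P 0)
  refine ⟨rfl, rfl, rfl, fun a c => ?_, hJZ, fun a => ?_, fun a => ?_, hHZ, fun a => ?_, hZZ⟩
  · fin_cases a <;> fin_cases c <;> simp [kron, hP01, hP11, hsym (P 1) (P 0)]
  · fin_cases a <;> assumption
  · fin_cases a <;> assumption
  · fin_cases a <;> assumption

end AristotelianBrackets

end LieAlgebra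

/-- For the centrally extended aristotelian static algebra in 2+1 dimensions
(basis `{J, H, P_1, P_2, Z}`, nonzero brackets `[J,P_a] = ε_{am}P_m`, `[P_a,P_b] = ε_{ab}Z`,
with `H`, `Z` central): (i) the indicated symmetric bilinear forms are invariant for all
parameter values; (ii) every invariant symmetric bilinear form is of this type; (iii) such a
form is nondegenerate iff `χ_P ≠ 0` and `χ_H ≠ 0`. -/
theorem aristotelian_static_extended_metrics
    (g : Type*) [LieRing g] [LieAlgebra ℝ g]
    (J H Z : g) (P : Fin 2 → g)
    (hindep : LinearIndependent ℝ ![J, H, P 0, P 1, Z])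
    (hspan : Submodule.span ℝ (Set.range ![J, H, P 0, P 1, Z]) = ⊤)
    (hJP : ∀ a, ⁅J, P a⁆ = ∑ m, eps a m • P m)
    (hPP : ∀ a b, ⁅P a, P b⁆ = eps a b • Z)
    (hHcentral : ∀ x : g, ⁅H, x⁆ = 0)
    (hZcentral : ∀ x : g, ⁅Z, x⁆ = 0) :
    -- (i) existence and invariance
    (∀ χJ χJH χH χP : ℝ, ∃ Bil : g →ₗ[ℝ] g →ₗ[ℝ] ℝ,
        (∀ x y : g, Bil x y = Bil y x) ∧
        (∀ x y z : g, Bil ⁅z, x⁆ y + Bil x ⁅z, y⁆ = 0) ∧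
        Bil J J = χJ ∧ Bil J H = χJH ∧ Bil H H = χH ∧
        (∀ a b, Bil (P a) (P b) = χP * kron a b) ∧ Bil J Z = χP ∧
        (∀ a, Bil J (P a) = 0) ∧ (∀ a, Bil H (P a) = 0) ∧ Bil H Z = 0 ∧
        (∀ a, Bil (P a) Z = 0) ∧ Bil Z Z = 0) ∧
    -- (ii) every invariant symmetric bilinear form is of this type
    (∀ Bil : g →ₗ[ℝ] g →ₗ[ℝ] ℝ,
        (∀ x y : g, Bil x y = Bil y x) →
        (∀ x y z : g, Bil ⁅z, x⁆ y + Bil x ⁅z, y⁆ = 0) →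
        ∃ χJ χJH χH χP : ℝ,
          Bil J J = χJ ∧ Bil J H = χJH ∧ Bil H H = χH ∧
          (∀ a b, Bil (P a) (P b) = χP * kron a b) ∧ Bil J Z = χP ∧
          (∀ a, Bil J (P a) = 0) ∧ (∀ a, Bil H (P a) = 0) ∧ Bil H Z = 0 ∧
          (∀ a, Bil (P a) Z = 0) ∧ Bil Z Z = 0) ∧
    -- (iii) nondegeneracy criterion
    (∀ (χJ χJH χH χP : ℝ) (Bil : g →ₗ[ℝ] g →ₗ[ℝ] ℝ),
        (∀ x y : g, Bil x y = Bil y x) →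
        (∀ x y z : g, Bil ⁅z, x⁆ y + Bil x ⁅z, y⁆ = 0) →
        Bil J J = χJ → Bil J H = χJH → Bil H H = χH →
        (∀ a b, Bil (P a) (P b) = χP * kron a b) → Bil J Z = χP →
        (∀ a, Bil J (P a) = 0) → (∀ a, Bil H (P a) = 0) → Bil H Z = 0 →
        (∀ a, Bil (P a) Z = 0) → Bil Z Z = 0 →
        ((∀ x : g, (∀ y : g, Bil x y = 0) → x = 0) ↔ (χP ≠ 0 ∧ χH ≠ 0))) := by
  have h : AristotelianBrackets J H Z P := ⟨hJP, hPP, hHcentral, hZcentral⟩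
  let b := Module.Basis.mk hindep hspan.ge
  have hb : ⇑b = ![J, H, P 0, P 1, Z] := Module.Basis.coe_mk hindep hspan.ge
  refine ⟨fun χJ χJH χH χP => ?_,
    fun B hsym hinv => ⟨_, _, _, _, h.isAristotelianForm_of_invariant hsym hinv⟩,
    fun χJ χJH χH χP B hsym _ hJJ hJH hHH hPP hJZ hJP hHP hHZ hPZ hZZ => ?_⟩
  · have hsym := toLinearMap₂_aristotelianGram_symm b χJ χJH χH χP
    refine ⟨_, hsym, h.toLinearMap₂_aristotelianGram_invariant b hb χJ χJH χH χP, ?_⟩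
    exact (toMatrix₂_eq_aristotelianGram_iff b hb hsym).1 (LinearMap.toMatrix₂_toLinearMap₂ ..)
  · rw [← LinearMap.SeparatingLeft, LinearMap.separatingLeft_iff_det_ne_zero b,
      (toMatrix₂_eq_aristotelianGram_iff b hb hsym).2
        ⟨hJJ, hJH, hHH, hPP, hJZ, hJP, hHP, hHZ, hPZ, hZZ⟩, det_aristotelianGram]
    simp [and_comm]
end

section
/- Let g be the four-dimensional real Lie algebra with basis {J, H, P_1, P_2} and nonzero brackets [J,P_a] = ε_{am}P_m and [P_a,P_b] = ε_{ab}H, with H central (the aristotelian algebra A24, special to 2+1 dimensions). Then: (i) for all real χ and χ_J the symmetric bilinear form determined by B(P_a,P_b) = χδ_{ab}, B(J,H) = χ, B(J,J) = χ_J, with all other basis pairings zero, is invariant; (ii) every invariant symmetric bilinear form on g is of this type; and (iii) such a form is nondegenerate if and only if χ ≠ 0. -/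
theorem LinearMap.lie_invariant_of_basis {ι R L M : Type*} [CommRing R] [LieRing L]
    [LieAlgebra R L] [AddCommGroup M] [Module R M] (b : Module.Basis ι R L)
    (B : L →ₗ[R] L →ₗ[R] M) (h : ∀ i j k, B ⁅b k, b i⁆ (b j) + B (b i) ⁅b k, b j⁆ = 0)
    (x y z : L) : B ⁅z, x⁆ y + B x ⁅z, y⁆ = 0 := by
  revert x y
  induction b.mem_span z using Submodule.span_induction with
  | mem _ hz =>
    obtain ⟨k, rfl⟩ := hz
    have hk : B.compl₁₂ (LieAlgebra.ad R L (b k)) LinearMap.id +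
        B.compl₁₂ LinearMap.id (LieAlgebra.ad R L (b k)) = 0 :=
      LinearMap.ext_basis b b fun i j => by simpa using h i j k
    intro x y
    simpa using LinearMap.congr_fun₂ hk x y
  | zero => simp
  | add z w _ _ hz hw =>
    intro x y
    simp only [add_lie, map_add, LinearMap.add_apply]
    rw [add_add_add_comm, hz, hw, add_zero]
  | smul c z _ hz =>
    intro x y
    simp only [smul_lie, map_smul, LinearMap.smul_apply, ← smul_add, hz, smul_zero]

theorem lie_right_eq_zero_of_central {L : Type*} [LieRing L] {x : L} (hx : ∀ y : L, ⁅x, y⁆ = 0)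
    (y : L) : ⁅y, x⁆ = 0 := by
  rw [← lie_skew, hx, neg_zero]

namespace A24

variable {g : Type*} [LieRing g] [LieAlgebra ℝ g] {J H : g} {P : Fin 2 → g}

theorem lie_table (hJP : ∀ a, ⁅J, P a⁆ = ∑ m, eps a m • P m)
    (hPP : ∀ a b, ⁅P a, P b⁆ = eps a b • H) :
    ⁅J, P 0⁆ = P 1 ∧ ⁅J, P 1⁆ = -P 0 ∧ ⁅P 0, J⁆ = -P 1 ∧ ⁅P 1, J⁆ = P 0 ∧
      ⁅P 0, P 1⁆ = H ∧ ⁅P 1, P 0⁆ = -H := by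
  have h0 : ⁅J, P 0⁆ = P 1 := by simpa [eps, Fin.sum_univ_two] using hJP 0
  have h1 : ⁅J, P 1⁆ = -P 0 := by simpa [eps, Fin.sum_univ_two] using hJP 1
  exact ⟨h0, h1, by rw [← lie_skew, h0], by rw [← lie_skew, h1, neg_neg],
    by simpa [eps] using hPP 0 1, by simpa [eps] using hPP 1 0⟩

def IsA24Form (J H : g) (P : Fin 2 → g) (B : g →ₗ[ℝ] g →ₗ[ℝ] ℝ) (χ χJ : ℝ) : Prop :=
  (∀ a b, B (P a) (P b) = χ * kron a b) ∧ B J H = χ ∧ B J J = χJ ∧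
    (∀ a, B J (P a) = 0) ∧ B H H = 0 ∧ (∀ a, B H (P a) = 0)

theorem isA24Form_of_invariant (hJP : ∀ a, ⁅J, P a⁆ = ∑ m, eps a m • P m)
    (hPP : ∀ a b, ⁅P a, P b⁆ = eps a b • H) (hH : ∀ x : g, ⁅H, x⁆ = 0)
    {B : g →ₗ[ℝ] g →ₗ[ℝ] ℝ} (hsym : ∀ x y : g, B x y = B y x)
    (hinv : ∀ x y z : g, B ⁅z, x⁆ y + B x ⁅z, y⁆ = 0) : IsA24Form J H P B (B J H) (B J J) := by
  obtain ⟨-, -, hPJ₀, hPJ₁, hPP₀₁, hPP₁₀⟩ := lie_table hJP hPP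
  have hPH := lie_right_eq_zero_of_central hH
  have h00 := hinv J (P 0) (P 1)
  have h11 := hinv J (P 1) (P 0)
  have h01 := hinv J (P 1) (P 1)
  have hJ0 := hinv J J (P 1)
  have hJ1 := hinv J J (P 0)
  have hHH := hinv (P 1) H (P 0)
  have hH0 := hinv (P 1) (P 0) (P 0)
  have hH1 := hinv (P 1) (P 1) (P 0)
  simp only [hPJ₀, hPJ₁, hPP₀₁, hPP₁₀, hPH, lie_self, map_neg, map_zero,
    LinearMap.neg_apply] at h00 h11 h01 hJ0 hJ1 hHH hH0 hH1
  refine ⟨?_, rfl, rfl,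
    Fin.forall_fin_two.2 ⟨by linarith [hsym J (P 0)], by linarith [hsym J (P 1)]⟩,
    by linarith, Fin.forall_fin_two.2 ⟨by linarith, by linarith [hsym H (P 1)]⟩⟩
  simp only [Fin.forall_fin_two, kron, Fin.isValue, if_true, mul_one, mul_zero, zero_ne_one,
    one_ne_zero, if_false]
  exact ⟨⟨by linarith, by linarith⟩, by linarith [hsym (P 1) (P 0)], by linarith⟩

/-- The Gram matrix of an `IsA24Form` in the basis `(J, H, P 0, P 1)`. -/
def gram (χ χJ : ℝ) : Matrix (Fin 4) (Fin 4) ℝ :=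
  !![χJ, χ, 0, 0; χ, 0, 0, 0; 0, 0, χ, 0; 0, 0, 0, χ]

theorem det_gram (χ χJ : ℝ) : (gram χ χJ).det = -χ ^ 4 := by
  rw [gram, Matrix.det_succ_row_zero]
  simp [Fin.sum_univ_succ, Matrix.det_fin_three, Fin.succAbove]
  ring

theorem exists_invariant_isA24Form (hindep : LinearIndependent ℝ ![J, H, P 0, P 1])
    (hspan : Submodule.span ℝ (Set.range ![J, H, P 0, P 1]) = ⊤)
    (hJP : ∀ a, ⁅J, P a⁆ = ∑ m, eps a m • P m)
    (hPP : ∀ a b, ⁅P a, P b⁆ = eps a b • H) (hH : ∀ x : g, ⁅H, x⁆ = 0) (χ χJ : ℝ) :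
    ∃ B : g →ₗ[ℝ] g →ₗ[ℝ] ℝ, (∀ x y : g, B x y = B y x) ∧
      (∀ x y z : g, B ⁅z, x⁆ y + B x ⁅z, y⁆ = 0) ∧ IsA24Form J H P B χ χJ := by
  set b := Module.Basis.mk hindep hspan.ge
  set B := Matrix.toLinearMap₂ b b (gram χ χJ)
  have hB : ∀ i j, B (![J, H, P 0, P 1] i) (![J, H, P 0, P 1] j) = gram χ χJ i j := by
    intro i j
    rw [← Module.Basis.mk_apply hindep hspan.ge i, ← Module.Basis.mk_apply hindep hspan.ge j]
    exact Matrix.toLinearMap₂_apply_basis b b _ i j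
  simp only [Nat.succ_eq_add_one, Nat.reduceAdd, Fin.isValue, gram, Matrix.of_apply,
    Matrix.cons_val', Matrix.cons_val_fin_one, Fin.forall_fin_succ, Matrix.cons_val_zero,
    Matrix.cons_val_succ, forall_const] at hB
  obtain ⟨hJP₀, hJP₁, hPJ₀, hPJ₁, hPP₀₁, hPP₁₀⟩ := lie_table hJP hPP
  refine ⟨B, ?_, ?_, ?_⟩
  · have hflip : B = B.flip := LinearMap.ext_basis b b fun i j => by
      fin_cases i <;> fin_cases j <;> simp [b, hB]
    exact fun x y => LinearMap.congr_fun₂ hflip x y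
  · refine LinearMap.lie_invariant_of_basis b B fun i j k => ?_
    fin_cases i <;> fin_cases j <;> fin_cases k <;>
      simp [b, hB, hJP₀, hJP₁, hPJ₀, hPJ₁, hPP₀₁, hPP₁₀, hH, lie_right_eq_zero_of_central hH]
  · simp [IsA24Form, Fin.forall_fin_two, kron, hB]

theorem separatingLeft_iff_ne_zero (hindep : LinearIndependent ℝ ![J, H, P 0, P 1])
    (hspan : Submodule.span ℝ (Set.range ![J, H, P 0, P 1]) = ⊤)
    {B : g →ₗ[ℝ] g →ₗ[ℝ] ℝ} (hsym : ∀ x y : g, B x y = B y x) {χ χJ : ℝ}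
    (hB : IsA24Form J H P B χ χJ) : B.SeparatingLeft ↔ χ ≠ 0 := by
  obtain ⟨hPP, hJH, hJJ, hJP, hHH, hHP⟩ := hB
  set b := Module.Basis.mk hindep hspan.ge
  have hgram : LinearMap.toMatrix₂ b b B = gram χ χJ := by
    ext i j
    fin_cases i <;> fin_cases j <;>
      simp [b, gram, kron, hPP, hJH, hJJ, hJP, hHH, hHP, hsym _ J, hsym (P _) H]
  rw [LinearMap.separatingLeft_iff_det_ne_zero b, hgram, det_gram]
  simp

end A24

/-- For the aristotelian algebra A24 in 2+1 dimensions (basis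
`{J, H, P_1, P_2}`, nonzero brackets `[J,P_a] = ε_{am}P_m`, `[P_a,P_b] = ε_{ab}H`, with `H`
central): (i) the indicated symmetric bilinear forms are invariant for all `χ, χ_J`;
(ii) every invariant symmetric bilinear form is of this type; (iii) such a form is
nondegenerate iff `χ ≠ 0`. -/
theorem aristotelian_A24_metrics
    (g : Type*) [LieRing g] [LieAlgebra ℝ g]
    (J H : g) (P : Fin 2 → g)
    (hindep : LinearIndependent ℝ ![J, H, P 0, P 1])
    (hspan : Submodule.span ℝ (Set.range ![J, H, P 0, P 1]) = ⊤)
    (hJP : ∀ a, ⁅J, P a⁆ = ∑ m, eps a m • P m)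
    (hPP : ∀ a b, ⁅P a, P b⁆ = eps a b • H)
    (hHcentral : ∀ x : g, ⁅H, x⁆ = 0) :
    -- (i) existence and invariance
    (∀ χ χJ : ℝ, ∃ Bil : g →ₗ[ℝ] g →ₗ[ℝ] ℝ,
        (∀ x y : g, Bil x y = Bil y x) ∧
        (∀ x y z : g, Bil ⁅z, x⁆ y + Bil x ⁅z, y⁆ = 0) ∧
        (∀ a b, Bil (P a) (P b) = χ * kron a b) ∧ Bil J H = χ ∧ Bil J J = χJ ∧
        (∀ a, Bil J (P a) = 0) ∧ Bil H H = 0 ∧ (∀ a, Bil H (P a) = 0)) ∧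
    -- (ii) every invariant symmetric bilinear form is of this type
    (∀ Bil : g →ₗ[ℝ] g →ₗ[ℝ] ℝ,
        (∀ x y : g, Bil x y = Bil y x) →
        (∀ x y z : g, Bil ⁅z, x⁆ y + Bil x ⁅z, y⁆ = 0) →
        ∃ χ χJ : ℝ,
          (∀ a b, Bil (P a) (P b) = χ * kron a b) ∧ Bil J H = χ ∧ Bil J J = χJ ∧
          (∀ a, Bil J (P a) = 0) ∧ Bil H H = 0 ∧ (∀ a, Bil H (P a) = 0)) ∧
    -- (iii) nondegeneracy criterion
    (∀ (χ χJ : ℝ) (Bil : g →ₗ[ℝ] g →ₗ[ℝ] ℝ),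
        (∀ x y : g, Bil x y = Bil y x) →
        (∀ x y z : g, Bil ⁅z, x⁆ y + Bil x ⁅z, y⁆ = 0) →
        (∀ a b, Bil (P a) (P b) = χ * kron a b) → Bil J H = χ → Bil J J = χJ →
        (∀ a, Bil J (P a) = 0) → Bil H H = 0 → (∀ a, Bil H (P a) = 0) →
        ((∀ x : g, (∀ y : g, Bil x y = 0) → x = 0) ↔ χ ≠ 0)) :=
  ⟨A24.exists_invariant_isA24Form hindep hspan hJP hPP hHcentral,
    fun _ hsym hinv => ⟨_, _, A24.isA24Form_of_invariant hJP hPP hHcentral hsym hinv⟩,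
    fun _ _ _ hsym _ hPPχ hJH hJJ hJPχ hHH hHP =>
      A24.separatingLeft_iff_ne_zero hindep hspan hsym ⟨hPPχ, hJH, hJJ, hJPχ, hHH, hHP⟩⟩
end
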